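/- arXiv:2503.19286 — 6 statements merged into one kernel-verified Lean document; each statement's English description precedes it below -/
import Mathlib

section
/- Let $b_1^2 > \lambda_1 > \cdots > b_n^2 > \lambda_n$, define $x_i$ by the ellipsoidal coordinate formula $x_i^2 = \prod_j(b_i^2-\lambda_j)/\prod_{k\neq i}(b_i^2-b_k^2)$. Then for $j \neq j'$ the coordinate vector fields are orthogonal: $\sum_{i=1}^n \frac{\partial x_i}{\partial \lambda_j}\frac{\partial x_i}{\partial \lambda_{j'}} = 0$. -/
open Finset Polynomial

lemma basis_leadingCoeff {n : ℕ} (c : Fin n → ℝ) (hc : Function.Injective c) (i : Fin n) :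
    (Lagrange.basis univ c i).leadingCoeff = (∏ k ∈ univ.erase i, (c i - c k))⁻¹ := by
  rw [Lagrange.basis, Polynomial.leadingCoeff_prod, ← Finset.prod_inv_distrib]
  refine Finset.prod_congr rfl fun k hk => ?_
  have hik : c i ≠ c k := fun h => (Finset.mem_erase.mp hk).1 (hc h).symm
  rw [Lagrange.basisDivisor, leadingCoeff_mul, leadingCoeff_C,
    (Polynomial.monic_X_sub_C (c k)).leadingCoeff, mul_one]

lemma key_sum {n : ℕ} (c : Fin n → ℝ) (hc : Function.Injective c)
    (R : Polynomial ℝ) (hR : R.degree < ((n - 1 : ℕ) : WithBot ℕ)) :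
    ∑ i, R.eval (c i) / ∏ k ∈ univ.erase i, (c i - c k) = 0 := by
  have hinj : Set.InjOn c (univ : Finset (Fin n)) := hc.injOn
  have hRn : R.degree < ((univ : Finset (Fin n)).card : WithBot ℕ) := by
    refine lt_of_lt_of_le hR ?_
    simp only [Finset.card_univ, Fintype.card_fin]
    exact_mod_cast Nat.cast_le.mpr (Nat.sub_le n 1)
  have hEq := Lagrange.eq_interpolate hinj hRn
  have h0 : R.coeff (n - 1) = 0 := Polynomial.coeff_eq_zero_of_degree_lt hR
  have h1 : (Lagrange.interpolate univ c (fun i => R.eval (c i))).coeff (n - 1)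
      = ∑ i, R.eval (c i) / ∏ k ∈ univ.erase i, (c i - c k) := by
    rw [Lagrange.interpolate_apply, Polynomial.finset_sum_coeff]
    refine Finset.sum_congr rfl fun i _ => ?_
    have hdeg : (Lagrange.basis univ c i).natDegree = n - 1 := by
      rw [Lagrange.natDegree_basis hinj (mem_univ i), Finset.card_univ, Fintype.card_fin]
    rw [Polynomial.coeff_C_mul, ← hdeg, Polynomial.coeff_natDegree,
      basis_leadingCoeff c hc, div_eq_mul_inv]
  rw [← h1, ← hEq, h0]

/-- Orthogonality of the coordinate vector fields of ellipsoidal coordinates: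
for `j ≠ j'`, `∑ᵢ (∂xᵢ/∂λⱼ)(∂xᵢ/∂λ_{j'}) = 0`. -/
theorem stmt_4 (n : ℕ) (hn : 2 ≤ n) (b lam : Fin n → ℝ)
    (h1 : ∀ i, lam i < b i ^ 2)
    (h2 : ∀ i j : Fin n, i < j → b j ^ 2 < lam i)
    (X : (Fin n → ℝ) → Fin n → ℝ)
    (hX : ∀ l i, X l i =
      Real.sqrt ((∏ j, (b i ^ 2 - l j)) / ∏ k ∈ univ.erase i, (b i ^ 2 - b k ^ 2)))
    (j j' : Fin n) (hjj' : j ≠ j') :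
    ∑ i, (fderiv ℝ (fun l => X l i) lam (Pi.single j 1)) *
        (fderiv ℝ (fun l => X l i) lam (Pi.single j' 1)) = 0 := by
  have hpair : ∀ i m : Fin n, m ≠ i → 0 < (b i ^ 2 - lam m) * (b i ^ 2 - b m ^ 2) := by
    intro i m hmi
    rcases lt_or_gt_of_ne hmi with h | h
    · have hb : b i ^ 2 < lam m := h2 m i h
      have hb2 : lam m < b m ^ 2 := h1 m
      exact mul_pos_of_neg_of_neg (by linarith) (by linarith)
    · have hb : b m ^ 2 < lam i := h2 i m h
      have hb2 : lam m < b m ^ 2 := h1 m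
      have := h1 i
      exact mul_pos (by linarith) (by linarith)
  have hPD : ∀ i : Fin n,
      0 < (∏ m, (b i ^ 2 - lam m)) * (∏ k ∈ univ.erase i, (b i ^ 2 - b k ^ 2)) := by
    intro i
    have he : (∏ m, (b i ^ 2 - lam m)) * (∏ k ∈ univ.erase i, (b i ^ 2 - b k ^ 2)) =
        (b i ^ 2 - lam i) *
        ∏ m ∈ univ.erase i, ((b i ^ 2 - lam m) * (b i ^ 2 - b m ^ 2)) := by
      rw [Finset.prod_mul_distrib,
        ← Finset.mul_prod_erase univ (fun m => b i ^ 2 - lam m) (mem_univ i)]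
      ring
    rw [he]
    exact mul_pos (by linarith [h1 i])
      (Finset.prod_pos fun m hm => hpair i m (Finset.mem_erase.mp hm).1)
  have hDne : ∀ i : Fin n, (∏ k ∈ univ.erase i, (b i ^ 2 - b k ^ 2)) ≠ 0 := fun i hz => by
    have := hPD i; rw [hz, mul_zero] at this; exact lt_irrefl 0 this
  have hPne : ∀ i : Fin n, (∏ m, (b i ^ 2 - lam m)) ≠ 0 := fun i hz => by
    have := hPD i; rw [hz, zero_mul] at this; exact lt_irrefl 0 this
  have hg : ∀ i : Fin n,
      0 < (∏ m, (b i ^ 2 - lam m)) / (∏ k ∈ univ.erase i, (b i ^ 2 - b k ^ 2)) := by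
    intro i
    have he : (∏ m, (b i ^ 2 - lam m)) / (∏ k ∈ univ.erase i, (b i ^ 2 - b k ^ 2)) =
        ((∏ m, (b i ^ 2 - lam m)) * (∏ k ∈ univ.erase i, (b i ^ 2 - b k ^ 2))) /
        ((∏ k ∈ univ.erase i, (b i ^ 2 - b k ^ 2)) * (∏ k ∈ univ.erase i, (b i ^ 2 - b k ^ 2))) := by
      rw [mul_div_mul_right _ _ (hDne i)]
    rw [he]
    exact div_pos (hPD i) (mul_self_pos.mpr (hDne i))
  -- derivative computation
  have hderiv : ∀ (i m : Fin n),
      fderiv ℝ (fun l => X l i) lam (Pi.single m 1) =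
        -(∏ k ∈ univ.erase m, (b i ^ 2 - lam k)) /
          (∏ k ∈ univ.erase i, (b i ^ 2 - b k ^ 2)) /
          (2 * Real.sqrt ((∏ m', (b i ^ 2 - lam m')) /
            (∏ k ∈ univ.erase i, (b i ^ 2 - b k ^ 2)))) := by
    intro i m
    have hfun : (fun l => X l i) =
        fun l : Fin n → ℝ => Real.sqrt ((∏ m', (b i ^ 2 - l m')) *
          (∏ k ∈ univ.erase i, (b i ^ 2 - b k ^ 2))⁻¹) := by
      funext l; rw [hX l i, div_eq_mul_inv]
    have hprod : HasFDerivAt (fun l : Fin n → ℝ => ∏ m', (b i ^ 2 - l m'))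
        (∑ m', (∏ k ∈ univ.erase m', (b i ^ 2 - lam k)) •
          (-(ContinuousLinearMap.proj m' : (Fin n → ℝ) →L[ℝ] ℝ))) lam := by
      refine HasFDerivAt.finset_prod fun m' _ => ?_
      exact HasFDerivAt.const_sub
        ((ContinuousLinearMap.proj m' : (Fin n → ℝ) →L[ℝ] ℝ).hasFDerivAt) (b i ^ 2)
    have hmul := hprod.mul_const (∏ k ∈ univ.erase i, (b i ^ 2 - b k ^ 2))⁻¹
    have hval : (∏ m', (b i ^ 2 - lam m')) *
        (∏ k ∈ univ.erase i, (b i ^ 2 - b k ^ 2))⁻¹ ≠ 0 := by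
      rw [← div_eq_mul_inv]; exact (hg i).ne'
    have hsqrt := hmul.sqrt hval
    rw [hfun, hsqrt.fderiv]
    have hev : ((∑ m', (∏ k ∈ univ.erase m', (b i ^ 2 - lam k)) •
        (-(ContinuousLinearMap.proj m' : (Fin n → ℝ) →L[ℝ] ℝ)))) (Pi.single m 1) =
        -(∏ k ∈ univ.erase m, (b i ^ 2 - lam k)) := by
      rw [ContinuousLinearMap.sum_apply]
      rw [Finset.sum_eq_single m]
      · simp
      · intro k _ hk
        simp [Pi.single_apply, hk.symm]
      · simp
    simp only [ContinuousLinearMap.coe_smul', Pi.smul_apply, ContinuousLinearMap.smul_apply,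
      hev, smul_eq_mul]
    rw [← div_eq_mul_inv (∏ m', (b i ^ 2 - lam m'))]
    ring
  -- term computation
  have hterm : ∀ i, (fderiv ℝ (fun l => X l i) lam (Pi.single j 1)) *
      (fderiv ℝ (fun l => X l i) lam (Pi.single j' 1)) =
      (∏ k ∈ (univ.erase j).erase j', (b i ^ 2 - lam k)) /
        (∏ k ∈ univ.erase i, (b i ^ 2 - b k ^ 2)) / 4 := by
    intro i
    rw [hderiv i j, hderiv i j']
    set Dv := ∏ k ∈ univ.erase i, (b i ^ 2 - b k ^ 2) with hDv
    set Pv := ∏ m, (b i ^ 2 - lam m) with hPv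
    set s := Real.sqrt (Pv / Dv) with hs
    set a := ∏ k ∈ univ.erase j, (b i ^ 2 - lam k) with ha
    set a' := ∏ k ∈ univ.erase j', (b i ^ 2 - lam k) with ha'
    set r := ∏ k ∈ (univ.erase j).erase j', (b i ^ 2 - lam k) with hr
    have hsq : s * s = Pv / Dv := Real.mul_self_sqrt (hg i).le
    have hsne : s ≠ 0 := (Real.sqrt_pos.mpr (hg i)).ne'
    have hQ : a * a' = Pv * r := by
      have e1 : a = (b i ^ 2 - lam j') * r :=
        (Finset.mul_prod_erase (univ.erase j) (fun k => b i ^ 2 - lam k)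
          (Finset.mem_erase.mpr ⟨hjj'.symm, mem_univ j'⟩)).symm
      have e3 : (univ.erase j').erase j = (univ.erase j).erase j' := Finset.erase_right_comm
      have e2 : a' = (b i ^ 2 - lam j) * r := by
        rw [ha', ← Finset.mul_prod_erase (univ.erase j') (fun k => b i ^ 2 - lam k)
          (Finset.mem_erase.mpr ⟨hjj', mem_univ j⟩), e3]
      have e4 : Pv = (b i ^ 2 - lam j) * ((b i ^ 2 - lam j') * r) := by
        rw [hPv, ← Finset.mul_prod_erase univ (fun k => b i ^ 2 - lam k) (mem_univ j), ← e1, ← ha]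
      rw [e1, e2, e4]; ring
    have hDne' : Dv ≠ 0 := hDne i
    have hPne' : Pv ≠ 0 := hPne i
    have step1 : -a / Dv / (2 * s) * (-a' / Dv / (2 * s)) =
        (a * a') / (Dv * Dv * (4 * (s * s))) := by
      rw [div_div, div_div, div_mul_div_comm, neg_mul_neg]
      congr 1
      ring
    rw [step1, hsq, hQ]
    have step2 : Dv * Dv * (4 * (Pv / Dv)) = Pv * (4 * Dv) := by
      field_simp
    rw [step2, mul_div_mul_left r (4 * Dv) hPne', div_div]
    rw [mul_comm Dv 4, mul_comm 4 Dv]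
  rw [Finset.sum_congr rfl fun i _ => hterm i]
  -- apply key lemma
  have hcinj : Function.Injective (fun i => b i ^ 2) := by
    intro i k h
    by_contra hik
    rcases lt_or_gt_of_ne hik with hl | hl
    · have := h2 i k hl; have := h1 i; simp only at h; linarith
    · have := h2 k i hl; have := h1 k; simp only at h; linarith
  set R : Polynomial ℝ := ∏ k ∈ (univ.erase j).erase j', (Polynomial.X - Polynomial.C (lam k))
    with hR
  have hRdeg : R.degree < ((n - 1 : ℕ) : WithBot ℕ) := by
    have hdeg : R.degree = (((univ.erase j).erase j').card : WithBot ℕ) := by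
      rw [hR, Polynomial.degree_prod]
      simp [Polynomial.degree_X_sub_C]
    rw [hdeg]
    have hcard : ((univ.erase j).erase j').card = n - 2 := by
      rw [Finset.card_erase_of_mem (Finset.mem_erase.mpr ⟨hjj'.symm, mem_univ j'⟩),
        Finset.card_erase_of_mem (mem_univ j), Finset.card_univ, Fintype.card_fin]
      omega
    rw [hcard]
    have hlt : n - 2 < n - 1 := by omega
    exact_mod_cast hlt
  have hkey := key_sum (fun i => b i ^ 2) hcinj R hRdeg
  have heval : ∀ i, R.eval (b i ^ 2) =
      ∏ k ∈ (univ.erase j).erase j', (b i ^ 2 - lam k) := by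
    intro i; rw [hR, Polynomial.eval_prod]; simp
  calc ∑ i, (∏ k ∈ (univ.erase j).erase j', (b i ^ 2 - lam k)) /
        (∏ k ∈ univ.erase i, (b i ^ 2 - b k ^ 2)) / 4
      = (∑ i, R.eval (b i ^ 2) / ∏ k ∈ univ.erase i, (b i ^ 2 - b k ^ 2)) / 4 := by
        rw [Finset.sum_div]
        exact Finset.sum_congr rfl fun i _ => by rw [heval i]
    _ = 0 := by
        rw [hkey, zero_div]
end

section
/- Let $h_1 > h_2 > \cdots > h_{n-1} > 0$ and let $\mu_1,\dots,\mu_{n-1},\mu_n$ satisfy $h_{i+1}^2 < \mu_i^2 < h_i^2$ for $i < n-1$, $0 < \mu_{n-1}^2 < h_{n-1}^2$, $\mu_n^2 > 0$. Define $x_i^2 = \frac{(h_i^2+\mu_n^2)\prod_{j<n}(h_i^2-\mu_j^2)}{h_i^2 \prod_{j\neq i}(h_i^2-h_j^2)}$ for $i<n$ and $x_n^2 = \prod_j \mu_j^2 / \prod_{j<n}h_j^2$. Let $\sigma_k(\boldsymbol{\mu})$ be the $k$-th elementary symmetric polynomial of $\mu_1^2,\dots,\mu_{n-1}^2,-\mu_n^2$,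 let $\sigma_k(\boldsymbol{h})$ and $\sigma_{i,k}(\boldsymbol{h})$ be elementary symmetric polynomials of $h_1^2,\dots,h_{n-1}^2$ and of these with $h_i^2$ omitted. Then $\sigma_k(\boldsymbol{\mu}) = \sigma_k(\boldsymbol{h}) - \sigma_{k-1}(\boldsymbol{h})x_n^2 - \sum_{i=1}^{n-1}\sigma_{i,k-1}(\boldsymbol{h})x_i^2$ for $1 \le k \le n-1$, and $\sigma_n(\boldsymbol{\mu}) = -\sigma_{n-1}(\boldsymbol{h})x_n^2$. -/
open Finset

/-- The `k`-th elementary symmetric polynomial of the family `f` over the index set `s`. -/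
def esymm (s : Finset ℕ) (f : ℕ → ℝ) (k : ℕ) : ℝ :=
  ∑ t ∈ s.powersetCard k, ∏ j ∈ t, f j

lemma coeff_prod_X_sub_C (s : Finset ℕ) (g : ℕ → ℝ) (k : ℕ) (hk : k ≤ s.card) :
    (∏ i ∈ s, (Polynomial.X - Polynomial.C (g i))).coeff (s.card - k)
      = (-1)^k * esymm s g k := by
  have h1 : (∏ i ∈ s, (Polynomial.X - Polynomial.C (g i)))
      = ∏ i ∈ s, (Polynomial.X + Polynomial.C (-(g i))) := by
    simp [sub_eq_add_neg]
  rw [h1, Finset.prod_X_add_C_coeff s (fun i => -(g i)) (by omega),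
    Nat.sub_sub_self hk, esymm, Finset.mul_sum]
  refine Finset.sum_congr rfl fun t ht => ?_
  have htc : t.card = k := (Finset.mem_powersetCard.mp ht).2
  have : ∏ i ∈ t, -(g i) = ∏ i ∈ t, (-1) * g i :=
    Finset.prod_congr rfl fun i _ => (neg_one_mul _).symm
  rw [this, Finset.prod_mul_distrib, Finset.prod_const, htc]

/-- In modified ellipsoidal coordinates, the elementary symmetric polynomials of
`μ₁², …, μ_{n-1}², -μₙ²` are affine functions of the squared Cartesian coordinates.
Indices are `0`-based: `h 0, …, h (n-2)` and `μ 0, …, μ (n-1)`, `x 0, …, x (n-1)`. -/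
theorem stmt_5 (n : ℕ) (hn : 3 ≤ n) (h μ x : ℕ → ℝ)
    (hdec : ∀ i j, i < j → j < n-1 → h j < h i)
    (hpos : ∀ i < n-1, 0 < h i)
    (hμ1 : ∀ i, i+1 < n-1 → h (i+1) ^ 2 < μ i ^ 2 ∧ μ i ^ 2 < h i ^ 2)
    (hμ2 : 0 < μ (n-2) ^ 2 ∧ μ (n-2) ^ 2 < h (n-2) ^ 2)
    (hμ3 : 0 < μ (n-1) ^ 2)
    (hx : ∀ i < n-1, x i ^ 2 =
      ((h i ^ 2 + μ (n-1) ^ 2) * ∏ j ∈ range (n-1), (h i ^ 2 - μ j ^ 2)) /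
        (h i ^ 2 * ∏ j ∈ (range (n-1)).erase i, (h i ^ 2 - h j ^ 2)))
    (hxn : x (n-1) ^ 2 = (∏ j ∈ range n, μ j ^ 2) / ∏ j ∈ range (n-1), h j ^ 2) :
    (∀ k, 1 ≤ k → k ≤ n-1 →
      esymm (range n) (fun j => if j = n-1 then -(μ j ^ 2) else μ j ^ 2) k =
        esymm (range (n-1)) (fun j => h j ^ 2) k
          - esymm (range (n-1)) (fun j => h j ^ 2) (k-1) * x (n-1) ^ 2
          - ∑ i ∈ range (n-1),
              esymm ((range (n-1)).erase i) (fun j => h j ^ 2) (k-1) * x i ^ 2) ∧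
    esymm (range n) (fun j => if j = n-1 then -(μ j ^ 2) else μ j ^ 2) n =
      -(esymm (range (n-1)) (fun j => h j ^ 2) (n-1)) * x (n-1) ^ 2 := by
  classical
  obtain ⟨m, rfl⟩ : ∃ m, n = m + 1 := ⟨n - 1, by omega⟩
  simp only [Nat.add_sub_cancel] at hdec hpos hx hxn ⊢
  have hm : 2 ≤ m := by omega
  clear hμ1 hμ2 hμ3 hn
  set f : ℕ → ℝ := fun j => if j = m then -(μ j ^ 2) else μ j ^ 2 with hf
  -- nonvanishing facts
  have hsqlt : ∀ i j, i < j → j < m → h j ^ 2 < h i ^ 2 := by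
    intro i j hij hj
    have h1 := hdec i j hij hj
    have h2 := hpos j hj
    nlinarith
  have hsqne : ∀ i, i < m → ∀ j, j < m → i ≠ j → h i ^ 2 - h j ^ 2 ≠ 0 := by
    intro i hi j hj hij
    rcases lt_or_gt_of_ne hij with h1 | h1
    · have := hsqlt i j h1 hj; intro hc; nlinarith
    · have := hsqlt j i h1 hi; intro hc; nlinarith
  have hne0 : ∀ i, i < m → h i ^ 2 ≠ 0 := fun i hi => pow_ne_zero _ (ne_of_gt (hpos i hi))
  have hprodh : (∏ j ∈ range m, h j ^ 2) ≠ 0 :=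
    Finset.prod_ne_zero_iff.mpr fun j hj => hne0 j (mem_range.mp hj)
  have hDne : ∀ i, i < m → (∏ j ∈ (range m).erase i, (h i ^ 2 - h j ^ 2)) ≠ 0 := by
    intro i hi
    refine Finset.prod_ne_zero_iff.mpr fun j hj => ?_
    obtain ⟨hji, hjm⟩ := Finset.mem_erase.mp hj
    exact hsqne i hi j (mem_range.mp hjm) (Ne.symm hji)
  -- the polynomials
  set P : Polynomial ℝ := ∏ j ∈ range (m+1), (Polynomial.X - Polynomial.C (f j)) with hP
  set R : Polynomial ℝ := ∏ j ∈ range m, (Polynomial.X - Polynomial.C (h j ^ 2)) with hR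
  set Ri : ℕ → Polynomial ℝ :=
    fun i => ∏ j ∈ (range m).erase i, (Polynomial.X - Polynomial.C (h j ^ 2)) with hRi
  set S : Polynomial ℝ := ∑ i ∈ range m, Polynomial.C (x i ^ 2) * Ri i with hS
  set Q : Polynomial ℝ := (Polynomial.X + Polynomial.C (x m ^ 2)) * R + Polynomial.X * S
    with hQ
  -- degree facts
  have monP : P.Monic := Polynomial.monic_prod_of_monic _ _ fun j _ => Polynomial.monic_X_sub_C _
  have monR : R.Monic := Polynomial.monic_prod_of_monic _ _ fun j _ => Polynomial.monic_X_sub_C _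
  have monRi : ∀ i, (Ri i).Monic :=
    fun i => Polynomial.monic_prod_of_monic _ _ fun j _ => Polynomial.monic_X_sub_C _
  have degP : P.natDegree = m + 1 := by
    rw [hP, Polynomial.natDegree_prod_of_monic _ _ fun j _ => Polynomial.monic_X_sub_C _]
    simp only [Polynomial.natDegree_X_sub_C, Finset.sum_const, card_range, smul_eq_mul, mul_one]
  have degR : R.natDegree = m := by
    rw [hR, Polynomial.natDegree_prod_of_monic _ _ fun j _ => Polynomial.monic_X_sub_C _]
    simp only [Polynomial.natDegree_X_sub_C, Finset.sum_const, card_range, smul_eq_mul, mul_one]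
  have degRi : ∀ i, i < m → (Ri i).natDegree = m - 1 := by
    intro i hi
    simp only [hRi]
    rw [Polynomial.natDegree_prod_of_monic _ _ fun j _ => Polynomial.monic_X_sub_C _]
    simp only [Polynomial.natDegree_X_sub_C]
    rw [Finset.sum_const, Finset.card_erase_of_mem (mem_range.mpr hi), card_range]
    simp
  have monM : ((Polynomial.X + Polynomial.C (x m ^ 2)) * R).Monic :=
    (Polynomial.monic_X_add_C _).mul monR
  have degM : ((Polynomial.X + Polynomial.C (x m ^ 2)) * R).natDegree = m + 1 := by
    rw [Polynomial.natDegree_mul (Polynomial.monic_X_add_C _).ne_zero monR.ne_zero,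
      Polynomial.natDegree_X_add_C, degR, add_comm]
  have degS : S.degree ≤ ((m - 1 : ℕ) : WithBot ℕ) := by
    refine (Polynomial.degree_sum_le _ _).trans (Finset.sup_le fun i hi => ?_)
    refine (Polynomial.degree_mul_le _ _).trans ?_
    have h1 : (Polynomial.C (x i ^ 2)).degree ≤ 0 := Polynomial.degree_C_le
    have h2 : (Ri i).degree ≤ ((m - 1 : ℕ) : WithBot ℕ) := by
      refine (Polynomial.degree_le_natDegree).trans ?_
      rw [degRi i (mem_range.mp hi)]
    calc (Polynomial.C (x i ^ 2)).degree + (Ri i).degree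
        ≤ 0 + ((m - 1 : ℕ) : WithBot ℕ) := add_le_add h1 h2
      _ = ((m - 1 : ℕ) : WithBot ℕ) := zero_add _
  have degXS : (Polynomial.X * S).degree < ((m + 1 : ℕ) : WithBot ℕ) := by
    refine lt_of_le_of_lt ((Polynomial.degree_mul_le _ _).trans ?_)
      (?_ : ((m : ℕ) : WithBot ℕ) < ((m + 1 : ℕ) : WithBot ℕ))
    · calc Polynomial.X.degree + S.degree
          ≤ 1 + ((m - 1 : ℕ) : WithBot ℕ) := add_le_add Polynomial.degree_X.le degS
        _ = ((1 + (m - 1) : ℕ) : WithBot ℕ) := by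
            rw [Nat.cast_add, Nat.cast_one]
        _ = ((m : ℕ) : WithBot ℕ) := by congr 1; omega
    · exact_mod_cast Nat.lt_succ_self m
  have degMfull : ((Polynomial.X + Polynomial.C (x m ^ 2)) * R).degree
      = ((m + 1 : ℕ) : WithBot ℕ) := by
    rw [Polynomial.degree_eq_natDegree monM.ne_zero, degM]
  have degQ : Q.degree = ((m + 1 : ℕ) : WithBot ℕ) := by
    rw [hQ, Polynomial.degree_add_eq_left_of_degree_lt (degMfull ▸ degXS), degMfull]
  have lcQ : Q.leadingCoeff = 1 := by
    rw [hQ, Polynomial.leadingCoeff_add_of_degree_lt' (degMfull ▸ degXS)]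
    exact monM
  have degPfull : P.degree = ((m + 1 : ℕ) : WithBot ℕ) := by
    rw [Polynomial.degree_eq_natDegree monP.ne_zero, degP]
  -- evaluations
  have evalP : ∀ a : ℝ, P.eval a = (a + μ m ^ 2) * ∏ j ∈ range m, (a - μ j ^ 2) := by
    intro a
    rw [hP, Polynomial.eval_prod]
    simp only [Polynomial.eval_sub, Polynomial.eval_X, Polynomial.eval_C]
    rw [Finset.prod_range_succ]
    have hfm : f m = -(μ m ^ 2) := if_pos rfl
    rw [hfm, sub_neg_eq_add, mul_comm]
    congr 1
    refine Finset.prod_congr rfl fun j hj => ?_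
    have : j ≠ m := by have := mem_range.mp hj; omega
    simp [hf, this]
  have evalR : ∀ a : ℝ, R.eval a = ∏ j ∈ range m, (a - h j ^ 2) := by
    intro a
    rw [hR, Polynomial.eval_prod]
    simp only [Polynomial.eval_sub, Polynomial.eval_X, Polynomial.eval_C]
  have evalRi : ∀ i, ∀ a : ℝ, (Ri i).eval a = ∏ j ∈ (range m).erase i, (a - h j ^ 2) := by
    intro i a
    simp only [hRi]
    rw [Polynomial.eval_prod]
    simp only [Polynomial.eval_sub, Polynomial.eval_X, Polynomial.eval_C]
  have evalQh : ∀ i, i < m →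
      Q.eval (h i ^ 2) = h i ^ 2 * (x i ^ 2 * ∏ j ∈ (range m).erase i, (h i ^ 2 - h j ^ 2)) := by
    intro i hi
    have hR0 : R.eval (h i ^ 2) = 0 := by
      rw [evalR]
      exact Finset.prod_eq_zero (mem_range.mpr hi) (sub_self _)
    have hSv : S.eval (h i ^ 2) = x i ^ 2 * ∏ j ∈ (range m).erase i, (h i ^ 2 - h j ^ 2) := by
      rw [hS, Polynomial.eval_finset_sum]
      rw [Finset.sum_eq_single i]
      · simp [evalRi]
      · intro j hj hji
        simp only [Polynomial.eval_mul, Polynomial.eval_C, evalRi]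
        have : i ∈ (range m).erase j :=
          Finset.mem_erase.mpr ⟨Ne.symm hji, mem_range.mpr hi⟩
        have hz : ∏ l ∈ (range m).erase j, (h i ^ 2 - h l ^ 2) = 0 :=
          Finset.prod_eq_zero this (sub_self _)
        rw [hz, mul_zero]
      · intro hcon
        exact absurd (mem_range.mpr hi) hcon
    rw [hQ]
    simp only [Polynomial.eval_add, Polynomial.eval_mul, Polynomial.eval_X, Polynomial.eval_C,
      hR0, hSv]
    ring
  have hPQevalh : ∀ i, i < m → P.eval (h i ^ 2) = Q.eval (h i ^ 2) := by
    intro i hi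
    rw [evalQh i hi, evalP, hx i hi]
    field_simp [hne0 i hi, hDne i hi, (hpos i hi).ne']
  have hPQeval0 : P.eval 0 = Q.eval 0 := by
    have hprodμ : ∏ j ∈ range m, f j = ∏ j ∈ range m, μ j ^ 2 := by
      refine Finset.prod_congr rfl fun j hj => ?_
      have : j ≠ m := by have := mem_range.mp hj; omega
      simp [hf, this]
    rw [hQ, evalP]
    simp only [Polynomial.eval_add, Polynomial.eval_mul, Polynomial.eval_X, Polynomial.eval_C,
      evalR]
    rw [zero_mul, add_zero, zero_add]
    have neg1 : ∀ g : ℕ → ℝ, ∏ j ∈ range m, (0 - g j) = (-1 : ℝ)^m * ∏ j ∈ range m, g j := by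
      intro g
      have : ∀ j ∈ range m, (0 : ℝ) - g j = (-1) * g j := fun j _ => by ring
      rw [Finset.prod_congr rfl this, Finset.prod_mul_distrib, Finset.prod_const, card_range]
    rw [neg1 (fun j => μ j ^ 2), neg1 (fun j => h j ^ 2), hxn, Finset.prod_range_succ]
    field_simp
    ring
  -- the evaluation points
  set pts : Finset ℝ := insert 0 ((range m).image fun i => h i ^ 2) with hpts
  have hinj : Set.InjOn (fun i => h i ^ 2) (range m) := by
    intro i hi j hj hij
    simp only [Finset.coe_range, Set.mem_Iio] at hi hj
    by_contra hne
    rcases lt_or_gt_of_ne hne with h1 | h1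
    · have := hsqlt i j h1 hj; simp only at hij; nlinarith
    · have := hsqlt j i h1 hi; simp only at hij; nlinarith
  have hcard : pts.card = m + 1 := by
    rw [hpts, Finset.card_insert_of_notMem, Finset.card_image_of_injOn hinj, card_range]
    intro hc
    obtain ⟨i, hi, hieq⟩ := Finset.mem_image.mp hc
    exact hne0 i (mem_range.mp hi) hieq
  have hPQ : P = Q := by
    have hzero : P - Q = 0 := by
      refine Polynomial.eq_zero_of_degree_lt_of_eval_finset_eq_zero pts ?_ ?_
      · rw [hcard]
        calc (P - Q).degree < P.degree :=
              Polynomial.degree_sub_lt (degPfull.trans degQ.symm) monP.ne_zero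
                (by rw [monP.leadingCoeff, lcQ])
          _ = ((m + 1 : ℕ) : WithBot ℕ) := degPfull
      · intro a ha
        rw [Polynomial.eval_sub, sub_eq_zero]
        rcases Finset.mem_insert.mp ha with rfl | hmem
        · exact hPQeval0
        · obtain ⟨i, hi, rfl⟩ := Finset.mem_image.mp hmem
          exact hPQevalh i (mem_range.mp hi)
    exact sub_eq_zero.mp hzero
  constructor
  · intro k hk1 hk2
    obtain ⟨k', rfl⟩ : ∃ k', k = k' + 1 := ⟨k - 1, by omega⟩
    have hk'm : k' + 1 ≤ m := hk2
    simp only [Nat.add_sub_cancel]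
    have hA1 : ((-1 : ℝ)) ^ (k' + 1) * (-1 : ℝ) ^ (k' + 1) = 1 := by
      rw [← mul_pow]; norm_num
    have hA2 : ((-1 : ℝ)) ^ (k' + 1) * (-1 : ℝ) ^ k' = -1 := by
      rw [pow_succ, mul_right_comm, ← mul_pow]; norm_num
    have hLHS : esymm (range (m + 1)) f (k' + 1)
        = (-1 : ℝ) ^ (k' + 1) * P.coeff (m + 1 - (k' + 1)) := by
      have hcoe := coeff_prod_X_sub_C (range (m + 1)) f (k' + 1) (by rw [card_range]; omega)
      rw [card_range, ← hP] at hcoe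
      rw [hcoe, ← mul_assoc, hA1, one_mul]
    have hRc1 : R.coeff (m - (k' + 1))
        = (-1 : ℝ) ^ (k' + 1) * esymm (range m) (fun j => h j ^ 2) (k' + 1) := by
      have hcoe := coeff_prod_X_sub_C (range m) (fun j => h j ^ 2) (k' + 1)
        (by rw [card_range]; omega)
      rw [card_range, ← hR] at hcoe
      exact hcoe
    have hRc2 : R.coeff ((m - (k' + 1)) + 1)
        = (-1 : ℝ) ^ k' * esymm (range m) (fun j => h j ^ 2) k' := by
      have hcoe := coeff_prod_X_sub_C (range m) (fun j => h j ^ 2) k'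
        (by rw [card_range]; omega)
      rw [card_range, ← hR] at hcoe
      have hidx : (m - (k' + 1)) + 1 = m - k' := by omega
      rw [hidx]; exact hcoe
    have hRic : ∀ i ∈ range m, (Ri i).coeff (m - (k' + 1))
        = (-1 : ℝ) ^ k' * esymm ((range m).erase i) (fun j => h j ^ 2) k' := by
      intro i hi
      have hcard : ((range m).erase i).card = m - 1 := by
        rw [Finset.card_erase_of_mem hi, card_range]
      have hcoe := coeff_prod_X_sub_C ((range m).erase i) (fun j => h j ^ 2) k'
        (by rw [hcard]; omega)
      rw [hcard] at hcoe
      have hidx : m - (k' + 1) = m - 1 - k' := by omega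
      rw [hidx]
      simpa only [hRi] using hcoe
    have hQc : Q.coeff ((m - (k' + 1)) + 1) =
        R.coeff (m - (k' + 1)) + x m ^ 2 * R.coeff ((m - (k' + 1)) + 1)
          + ∑ i ∈ range m, x i ^ 2 * (Ri i).coeff (m - (k' + 1)) := by
      rw [hQ, add_mul, Polynomial.coeff_add, Polynomial.coeff_add,
        Polynomial.coeff_X_mul, Polynomial.coeff_C_mul, Polynomial.coeff_X_mul,
        hS, Polynomial.finset_sum_coeff]
      simp only [Polynomial.coeff_C_mul]
    have hQc2 : (-1 : ℝ) ^ (k' + 1) * Q.coeff ((m - (k' + 1)) + 1) =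
        esymm (range m) (fun j => h j ^ 2) (k' + 1)
          - esymm (range m) (fun j => h j ^ 2) k' * x m ^ 2
          - ∑ i ∈ range m, esymm ((range m).erase i) (fun j => h j ^ 2) k' * x i ^ 2 := by
      have hsum : ∑ i ∈ range m, x i ^ 2 * (Ri i).coeff (m - (k' + 1))
          = ∑ i ∈ range m,
              x i ^ 2 * ((-1 : ℝ) ^ k' * esymm ((range m).erase i) (fun j => h j ^ 2) k') :=
        Finset.sum_congr rfl fun i hi => by rw [hRic i hi]
      rw [hQc, hRc1, hRc2, hsum]
      rw [mul_add, mul_add, Finset.mul_sum]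
      have hZ : ∑ i ∈ range m, (-1 : ℝ) ^ (k' + 1) *
            (x i ^ 2 * ((-1 : ℝ) ^ k' * esymm ((range m).erase i) (fun j => h j ^ 2) k'))
          = ∑ i ∈ range m,
              -(esymm ((range m).erase i) (fun j => h j ^ 2) k' * x i ^ 2) := by
        refine Finset.sum_congr rfl fun i _ => ?_
        have : (-1 : ℝ) ^ (k' + 1) *
            (x i ^ 2 * ((-1 : ℝ) ^ k' * esymm ((range m).erase i) (fun j => h j ^ 2) k'))
            = ((-1 : ℝ) ^ (k' + 1) * (-1 : ℝ) ^ k') *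
              (x i ^ 2 * esymm ((range m).erase i) (fun j => h j ^ 2) k') := by ring
        rw [this, hA2]; ring
      rw [hZ, Finset.sum_neg_distrib]
      have h1 : (-1 : ℝ) ^ (k' + 1) *
          ((-1 : ℝ) ^ (k' + 1) * esymm (range m) (fun j => h j ^ 2) (k' + 1))
          = esymm (range m) (fun j => h j ^ 2) (k' + 1) := by
        rw [← mul_assoc, hA1, one_mul]
      have h2 : (-1 : ℝ) ^ (k' + 1) *
          (x m ^ 2 * ((-1 : ℝ) ^ k' * esymm (range m) (fun j => h j ^ 2) k'))
          = -(esymm (range m) (fun j => h j ^ 2) k' * x m ^ 2) := by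
        have : (-1 : ℝ) ^ (k' + 1) *
            (x m ^ 2 * ((-1 : ℝ) ^ k' * esymm (range m) (fun j => h j ^ 2) k'))
            = ((-1 : ℝ) ^ (k' + 1) * (-1 : ℝ) ^ k') *
              (x m ^ 2 * esymm (range m) (fun j => h j ^ 2) k') := by ring
        rw [this, hA2]; ring
      rw [h1, h2]; ring
    rw [hLHS, hPQ, show m + 1 - (k' + 1) = (m - (k' + 1)) + 1 from by omega, hQc2]
  · have hfull : esymm (range (m + 1)) f (m + 1) = ∏ j ∈ range (m + 1), f j := by
      have hps := Finset.powersetCard_self (range (m + 1))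
      rw [card_range] at hps
      rw [esymm, hps, Finset.sum_singleton]
    have hfullh : esymm (range m) (fun j => h j ^ 2) m = ∏ j ∈ range m, h j ^ 2 := by
      have hps := Finset.powersetCard_self (range m)
      rw [card_range] at hps
      rw [esymm, hps, Finset.sum_singleton]
    have hprodμ : ∏ j ∈ range m, f j = ∏ j ∈ range m, μ j ^ 2 := by
      refine Finset.prod_congr rfl fun j hj => ?_
      have : j ≠ m := by have := mem_range.mp hj; omega
      simp [hf, this]
    rw [hfull, hfullh, Finset.prod_range_succ, hprodμ, hxn, Finset.prod_range_succ]
    have hfm : f m = -(μ m ^ 2) := if_pos rfl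
    rw [hfm]
    field_simp
end

section
/- With the notation of the modified ellipsoidal coordinates ($h_1 > \cdots > h_{n-1} > 0$, parameters $\mu_1,\dots,\mu_n$, Cartesian coordinates $x_1,\dots,x_n$ defined by $x_i^2 = (h_i^2+\mu_n^2)\prod_{j<n}(h_i^2-\mu_j^2)/(h_i^2\prod_{j\neq i}(h_i^2-h_j^2))$ and $x_n^2 = \prod_j\mu_j^2/\prod_{j<n}h_j^2$), one has the identity $$\sum_{i=1}^{n-1}\frac{x_i^2}{h_i^2} = 1 - \frac{\sigma_{n-1}(\boldsymbol{\mu})}{\sigma_{n-1}(\boldsymbol{h})} + \frac{\sigma_{n-2}(\boldsymbol{h})\,\sigma_n(\boldsymbol{\mu})}{\sigma_{n-1}(\boldsymbol{h})^2}.$$ In particular, the set $\{\mu_{n-1} = \mu_n = 0\}$ maps onto the ellipsoid $\sum_{i=1}^{n-1} x_i^2/h_i^2 = 1$, $x_n = 0$. -/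
open Finset Polynomial

lemma esymm_card (s : Finset ℕ) (f : ℕ → ℝ) : esymm s f s.card = ∏ j ∈ s, f j := by
  rw [esymm, powersetCard_self, sum_singleton]

lemma esymm_pred (s : Finset ℕ) (f : ℕ → ℝ) (hs : s.Nonempty) :
    esymm s f (s.card - 1) = ∑ i ∈ s, ∏ j ∈ s.erase i, f j := by
  rw [esymm]
  refine (sum_bij (fun a _ => s.erase a) ?_ ?_ ?_ ?_).symm
  · intro a ha
    rw [mem_powersetCard]
    exact ⟨erase_subset _ _, card_erase_of_mem ha⟩
  · intro a ha b hb hab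
    have hab' : s.erase a = s.erase b := hab
    by_contra hne
    exact (notMem_erase a s) (hab' ▸ mem_erase.mpr ⟨hne, ha⟩)
  · intro t ht
    rw [mem_powersetCard] at ht
    obtain ⟨hts, htc⟩ := ht
    have hc := hs.card_pos
    have h1 : (s \ t).card = 1 := by
      rw [card_sdiff_of_subset hts, htc]; omega
    obtain ⟨a, ha⟩ := card_eq_one.mp h1
    have has : a ∈ s := (mem_sdiff.mp (ha ▸ mem_singleton_self a)).1
    refine ⟨a, has, ?_⟩
    show s.erase a = t
    rw [erase_eq, ← ha, sdiff_sdiff_right_self, inf_eq_inter, inter_eq_right.mpr hts]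
  · intro a ha; rfl

lemma coeffZeroProd (s : Finset ℕ) (w : ℕ → ℝ) :
    (∏ j ∈ s, (X - C (w j))).coeff 0 = ∏ j ∈ s, (-(w j)) := by
  rw [coeff_zero_eq_eval_zero, eval_prod]
  simp

lemma coeffOneProd (s : Finset ℕ) (w : ℕ → ℝ) :
    (∏ j ∈ s, (X - C (w j))).coeff 1 = ∑ i ∈ s, ∏ j ∈ s.erase i, (-(w j)) := by
  induction s using Finset.induction with
  | empty => simp [coeff_one]
  | @insert a s ha ih =>
    rw [prod_insert ha, sum_insert ha, erase_insert ha]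
    have expand : (X - C (w a)) * ∏ j ∈ s, (X - C (w j))
        = X * ∏ j ∈ s, (X - C (w j)) - C (w a) * ∏ j ∈ s, (X - C (w j)) := by ring
    rw [expand, coeff_sub, coeff_X_mul, coeff_C_mul, coeffZeroProd, ih]
    have key : ∀ i ∈ s, ∏ j ∈ (insert a s).erase i, (-(w j))
        = (-(w a)) * ∏ j ∈ s.erase i, (-(w j)) := by
      intro i hi
      have hia : i ≠ a := by rintro rfl; exact ha hi
      rw [erase_insert_of_ne hia.symm, prod_insert (fun hmem => ha (mem_of_mem_erase hmem))]
    rw [sum_congr rfl key, ← mul_sum]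
    ring

lemma prodNeg (s : Finset ℕ) (f : ℕ → ℝ) :
    ∏ j ∈ s, (-(f j)) = (-1)^s.card * ∏ j ∈ s, f j := by
  calc ∏ j ∈ s, (-(f j)) = ∏ j ∈ s, ((-1) * f j) := prod_congr rfl (fun j _ => by ring)
  _ = (∏ _j ∈ s, (-1:ℝ)) * ∏ j ∈ s, f j := prod_mul_distrib
  _ = (-1)^s.card * ∏ j ∈ s, f j := by rw [prod_const]

lemma esymm_insert (s : Finset ℕ) (y : ℕ) (hy : y ∉ s) (f : ℕ → ℝ) (k : ℕ) :
    esymm (insert y s) f (k+1) = esymm s f (k+1) + f y * esymm s f k := by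
  rw [esymm, powersetCard_succ_insert hy, sum_union, esymm, esymm, mul_sum]
  · congr 1
    rw [sum_image]
    · refine sum_congr rfl fun t ht => ?_
      rw [mem_powersetCard] at ht
      rw [prod_insert (fun hmem => hy (ht.1 hmem))]
    · intro t1 h1 t2 h2 he
      rw [mem_coe, mem_powersetCard] at h1 h2
      have k1 : y ∉ t1 := fun hmem => hy (h1.1 hmem)
      have k2 : y ∉ t2 := fun hmem => hy (h2.1 hmem)
      rw [← erase_insert k1, ← erase_insert k2, he]
  · rw [disjoint_left]
    intro t ht1 ht2
    rw [mem_powersetCard] at ht1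
    obtain ⟨t', ht', rfl⟩ := mem_image.mp ht2
    exact hy (ht1.1 (mem_insert_self y t'))

lemma lagrangeCoeff (s : Finset ℕ) (v : ℕ → ℝ) (hinj : Set.InjOn v ↑s)
    (F : ℝ[X]) (hdeg : F.degree < s.card) (k : ℕ) :
    F.coeff k = ∑ i ∈ s, F.eval (v i) * ((∏ j ∈ s.erase i, (v i - v j))⁻¹ *
      (∏ j ∈ s.erase i, (X - C (v j))).coeff k) := by
  conv_lhs => rw [Lagrange.eq_interpolate hinj hdeg]
  rw [Lagrange.interpolate_apply, finset_sum_coeff]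
  refine sum_congr rfl fun i hi => ?_
  rw [coeff_C_mul]
  congr 1
  unfold Lagrange.basis Lagrange.basisDivisor
  rw [prod_mul_distrib, ← map_prod, coeff_C_mul, prod_inv_distrib]

lemma esymm_congr (s : Finset ℕ) (f g : ℕ → ℝ) (k : ℕ) (h : ∀ j ∈ s, f j = g j) :
    esymm s f k = esymm s g k := by
  unfold esymm
  refine sum_congr rfl fun t ht => prod_congr rfl fun j hj => ?_
  exact h j ((mem_powersetCard.mp ht).1 hj)

/-- In modified ellipsoidal coordinates,
`∑_{i<n} xᵢ²/hᵢ² = 1 - σ_{n-1}(μ)/σ_{n-1}(h) + σ_{n-2}(h)σₙ(μ)/σ_{n-1}(h)²`;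
in particular `{μ_{n-1} = μₙ = 0}` maps to the ellipsoid `∑ xᵢ²/hᵢ² = 1, xₙ = 0`.
Indices are `0`-based. -/
theorem stmt_6 (n : ℕ) (hn : 3 ≤ n) (h μ x : ℕ → ℝ)
    (hdec : ∀ i j, i < j → j < n-1 → h j < h i)
    (hpos : ∀ i < n-1, 0 < h i)
    (hμ1 : ∀ i, i+1 < n-1 → h (i+1) ^ 2 < μ i ^ 2 ∧ μ i ^ 2 < h i ^ 2)
    (hμ2 : μ (n-2) ^ 2 ≤ h (n-2) ^ 2)
    (hx : ∀ i < n-1, x i ^ 2 =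
      ((h i ^ 2 + μ (n-1) ^ 2) * ∏ j ∈ range (n-1), (h i ^ 2 - μ j ^ 2)) /
        (h i ^ 2 * ∏ j ∈ (range (n-1)).erase i, (h i ^ 2 - h j ^ 2)))
    (hxn : x (n-1) ^ 2 = (∏ j ∈ range n, μ j ^ 2) / ∏ j ∈ range (n-1), h j ^ 2) :
    (∑ i ∈ range (n-1), x i ^ 2 / h i ^ 2 =
      1 - esymm (range n) (fun j => if j = n-1 then -(μ j ^ 2) else μ j ^ 2) (n-1) /
            esymm (range (n-1)) (fun j => h j ^ 2) (n-1)
        + esymm (range (n-1)) (fun j => h j ^ 2) (n-2) *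
            esymm (range n) (fun j => if j = n-1 then -(μ j ^ 2) else μ j ^ 2) n /
            (esymm (range (n-1)) (fun j => h j ^ 2) (n-1)) ^ 2) ∧
    (μ (n-2) = 0 → μ (n-1) = 0 →
      ∑ i ∈ range (n-1), x i ^ 2 / h i ^ 2 = 1 ∧ x (n-1) ^ 2 = 0) := by
  clear hμ1 hμ2
  obtain ⟨m, rfl⟩ : ∃ m, n = m + 2 := ⟨n - 2, by omega⟩
  simp only [show m + 2 - 1 = m + 1 from rfl, show m + 2 - 2 = m from rfl] at hdec hpos hx hxn ⊢
  -- abbreviations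
  set a := μ (m+1) ^ 2 with ha
  set E := ∏ j ∈ range (m+1), h j ^ 2 with hE
  set Pμ := ∏ j ∈ range (m+1), μ j ^ 2 with hPμ
  set Sμ := ∑ i ∈ range (m+1), ∏ j ∈ (range (m+1)).erase i, μ j ^ 2 with hSμ
  set Sy := ∑ i ∈ range (m+1), ∏ j ∈ (range (m+1)).erase i, h j ^ 2 with hSy
  -- basic nonvanishing
  have hy0 : ∀ i, i < m+1 → h i ^ 2 ≠ 0 := fun i hi => pow_ne_zero _ (ne_of_gt (hpos i hi))
  have hyne : ∀ i j, i < m+1 → j < m+1 → i ≠ j → h i ^ 2 ≠ h j ^ 2 := by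
    intro i j hi hj hij
    rcases lt_or_gt_of_ne hij with hlt | hlt
    · exact ne_of_gt (pow_lt_pow_left₀ (hdec i j hlt hj) (hpos j hj).le two_ne_zero)
    · exact ne_of_lt (pow_lt_pow_left₀ (hdec j i hlt hi) (hpos i hi).le two_ne_zero)
  have hEne : E ≠ 0 := by
    rw [hE, prod_ne_zero_iff]
    exact fun i hi => hy0 i (mem_range.mp hi)
  -- the esymm values
  have hEsE : esymm (range (m+1)) (fun j => h j ^ 2) (m+1) = E := by
    have := esymm_card (range (m+1)) (fun j => h j ^ 2)
    rwa [card_range] at this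
  have hEsSy : esymm (range (m+1)) (fun j => h j ^ 2) m = Sy := by
    have := esymm_pred (range (m+1)) (fun j => h j ^ 2) nonempty_range_add_one
    rwa [card_range] at this
  have hgen : ∀ k, esymm (range (m+1)) (fun j => if j = m+1 then -(μ j ^ 2) else μ j ^ 2) k
      = esymm (range (m+1)) (fun j => μ j ^ 2) k := by
    intro k
    refine esymm_congr _ _ _ _ fun j hj => ?_
    rw [mem_range] at hj
    simp [Nat.ne_of_lt hj]
  have hσ : esymm (range (m+2)) (fun j => if j = m+1 then -(μ j ^ 2) else μ j ^ 2) (m+1)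
      = Pμ - a * Sμ := by
    rw [range_add_one, esymm_insert _ _ notMem_range_self, hgen, hgen, if_pos rfl]
    have h1 := esymm_card (range (m+1)) (fun j => μ j ^ 2)
    rw [card_range] at h1
    have h2 := esymm_pred (range (m+1)) (fun j => μ j ^ 2) nonempty_range_add_one
    rw [card_range] at h2
    simp only [Nat.add_sub_cancel] at h2
    rw [h1, h2, ← hPμ, ← hSμ, ← ha]
    ring
  have hσn : esymm (range (m+2)) (fun j => if j = m+1 then -(μ j ^ 2) else μ j ^ 2) (m+2)
      = -(a * Pμ) := by
    have h1 := esymm_card (range (m+2)) (fun j => if j = m+1 then -(μ j ^ 2) else μ j ^ 2)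
    rw [card_range] at h1
    rw [h1, prod_range_succ, if_pos rfl]
    have h2 : ∏ j ∈ range (m+1), (if j = m+1 then -(μ j ^ 2) else μ j ^ 2)
        = ∏ j ∈ range (m+1), μ j ^ 2 := by
      refine prod_congr rfl fun j hj => ?_
      rw [mem_range] at hj
      simp [Nat.ne_of_lt hj]
    rw [h2, ← hPμ, ← ha]
    ring
  -- the node function
  set v : ℕ → ℝ := fun i => if i = m + 1 then 0 else h i ^ 2 with hv
  have hvinj : Set.InjOn v ↑(range (m+2)) := by
    intro i hi j hj hij
    simp only [coe_range, Set.mem_Iio] at hi hj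
    by_cases h1 : i = m+1 <;> by_cases h2 : j = m+1
    · omega
    · exfalso; rw [hv] at hij; simp only [if_pos h1, if_neg h2] at hij
      exact hy0 j (by omega) hij.symm
    · exfalso; rw [hv] at hij; simp only [if_neg h1, if_pos h2] at hij
      exact hy0 i (by omega) hij
    · by_contra hne
      rw [hv] at hij; simp only [if_neg h1, if_neg h2] at hij
      exact hyne i j (by omega) (by omega) hne hij
  -- the polynomials
  set Rmu : Polynomial ℝ := ∏ j ∈ range (m+1), (X - C (μ j ^ 2)) with hRmu
  set Rh : Polynomial ℝ := ∏ j ∈ range (m+1), (X - C (h j ^ 2)) with hRh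
  set F : Polynomial ℝ := (X + C a) * Rmu - X * Rh with hF
  have hRmuM : Rmu.Monic := monic_prod_of_monic _ _ fun j _ => monic_X_sub_C _
  have hRhM : Rh.Monic := monic_prod_of_monic _ _ fun j _ => monic_X_sub_C _
  have hRmud : Rmu.natDegree = m + 1 := by
    rw [hRmu, natDegree_prod_of_monic _ _ fun j _ => monic_X_sub_C _]
    simp only [natDegree_X_sub_C, sum_const, card_range, smul_eq_mul, mul_one]
  have hRhd : Rh.natDegree = m + 1 := by
    rw [hRh, natDegree_prod_of_monic _ _ fun j _ => monic_X_sub_C _]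
    simp only [natDegree_X_sub_C, sum_const, card_range, smul_eq_mul, mul_one]
  have hQM : ((X + C a) * Rmu).Monic := (monic_X_add_C a).mul hRmuM
  have hPM : ((X : Polynomial ℝ) * Rh).Monic := monic_X.mul hRhM
  have hQd : ((X + C a) * Rmu).natDegree = m + 2 := by
    rw [(monic_X_add_C a).natDegree_mul hRmuM, natDegree_X_add_C, hRmud]
    omega
  have hPd : ((X : Polynomial ℝ) * Rh).natDegree = m + 2 := by
    rw [monic_X.natDegree_mul hRhM, natDegree_X, hRhd]
    omega
  have hdegF : F.degree < ((range (m+2)).card : WithBot ℕ) := by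
    rw [card_range]
    have hlt : F.degree < ((X + C a) * Rmu).degree := by
      refine degree_sub_lt ?_ hQM.ne_zero ?_
      · rw [degree_eq_natDegree hQM.ne_zero, degree_eq_natDegree hPM.ne_zero, hQd, hPd]
      · rw [hQM.leadingCoeff, hPM.leadingCoeff]
    rwa [degree_eq_natDegree hQM.ne_zero, hQd] at hlt
  have key := lagrangeCoeff (range (m+2)) v hvinj F hdegF 1
  -- pointwise values of v
  have hvm : v (m+1) = 0 := by simp [hv]
  have hvj : ∀ j, j ≠ m+1 → v j = h j ^ 2 := fun j hj => by simp [hv, hj]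
  have herase : ∀ i, i < m+1 → (range (m+2)).erase i = insert (m+1) ((range (m+1)).erase i) := by
    intro i hi
    rw [range_add_one, erase_insert_of_ne (by omega : (m+1:ℕ) ≠ i)]
  have hnotmem : ∀ i : ℕ, m+1 ∉ (range (m+1)).erase i := fun i hmem =>
    notMem_range_self (mem_of_mem_erase hmem)
  have cX : ∀ p : Polynomial ℝ, (X * p).coeff 1 = p.coeff 0 := fun p => by
    simpa using coeff_X_mul p 0
  -- LHS of key
  have hco : F.coeff 1 = (∏ j ∈ range (m+1), -(μ j ^ 2))
      + a * (∑ i ∈ range (m+1), ∏ j ∈ (range (m+1)).erase i, -(μ j ^ 2))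
      - ∏ j ∈ range (m+1), -(h j ^ 2) := by
    have e : F = X * Rmu + C a * Rmu - X * Rh := by rw [hF]; ring
    rw [e, coeff_sub, coeff_add, cX, cX, coeff_C_mul, hRmu, hRh,
      coeffZeroProd, coeffOneProd, coeffZeroProd]
  -- terms of the RHS sum, i < m+1
  have hterm : ∀ i ∈ range (m+1),
      F.eval (v i) * ((∏ j ∈ (range (m+2)).erase i, (v i - v j))⁻¹ *
        (∏ j ∈ (range (m+2)).erase i, (X - C (v j))).coeff 1)
      = x i ^ 2 * ∏ j ∈ (range (m+1)).erase i, -(h j ^ 2) := by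
    intro i hi
    rw [mem_range] at hi
    have hine : i ≠ m+1 := by omega
    have hvi : v i = h i ^ 2 := hvj i hine
    have hD : ∏ j ∈ (range (m+2)).erase i, (v i - v j)
        = h i ^ 2 * ∏ j ∈ (range (m+1)).erase i, (h i ^ 2 - h j ^ 2) := by
      rw [herase i hi, prod_insert (hnotmem i), hvi, hvm, sub_zero]
      congr 1
      refine prod_congr rfl fun j hj => ?_
      have hj1 : j ≠ m+1 := by
        have := mem_range.mp (mem_of_mem_erase hj); omega
      rw [hvj j hj1]
    have hC : (∏ j ∈ (range (m+2)).erase i, (X - C (v j))).coeff 1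
        = ∏ j ∈ (range (m+1)).erase i, -(h j ^ 2) := by
      rw [herase i hi, prod_insert (hnotmem i), hvm, C_0, sub_zero, cX, coeffZeroProd]
      refine prod_congr rfl fun j hj => ?_
      have hj1 : j ≠ m+1 := by
        have := mem_range.mp (mem_of_mem_erase hj); omega
      rw [hvj j hj1]
    have hFev : F.eval (v i) = (h i ^ 2 + a) * ∏ j ∈ range (m+1), (h i ^ 2 - μ j ^ 2) := by
      rw [hvi, hF, eval_sub, eval_mul, eval_mul, eval_add, eval_X, eval_C]
      have hRh0 : Rh.eval (h i ^ 2) = 0 := by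
        rw [hRh, eval_prod]
        refine prod_eq_zero (mem_range.mpr hi) ?_
        simp
      have hRmuE : Rmu.eval (h i ^ 2) = ∏ j ∈ range (m+1), (h i ^ 2 - μ j ^ 2) := by
        rw [hRmu, eval_prod]
        exact prod_congr rfl fun j _ => by simp
      rw [hRh0, hRmuE]; ring
    have hDne : h i ^ 2 * ∏ j ∈ (range (m+1)).erase i, (h i ^ 2 - h j ^ 2) ≠ 0 := by
      apply mul_ne_zero (hy0 i hi)
      rw [prod_ne_zero_iff]
      intro j hj
      have h1 := mem_range.mp (mem_of_mem_erase hj)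
      have h2 : j ≠ i := (mem_erase.mp hj).1
      exact sub_ne_zero_of_ne (hyne i j hi h1 (Ne.symm h2))
    rw [hD, hC, hFev, hx i hi]
    field_simp
  -- the last term
  have hermp1 : (range (m+2)).erase (m+1) = range (m+1) := by
    rw [range_add_one, erase_insert notMem_range_self]
  have hlast :
      F.eval (v (m+1)) * ((∏ j ∈ (range (m+2)).erase (m+1), (v (m+1) - v j))⁻¹ *
        (∏ j ∈ (range (m+2)).erase (m+1), (X - C (v j))).coeff 1)
      = (a * ∏ j ∈ range (m+1), -(μ j ^ 2)) *
        ((∏ j ∈ range (m+1), -(h j ^ 2))⁻¹ *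
         ∑ k ∈ range (m+1), ∏ j ∈ (range (m+1)).erase k, -(h j ^ 2)) := by
    rw [hermp1, hvm]
    have e1 : ∏ j ∈ range (m+1), ((0:ℝ) - v j) = ∏ j ∈ range (m+1), -(h j ^ 2) := by
      refine prod_congr rfl fun j hj => ?_
      have : j ≠ m+1 := by have := mem_range.mp hj; omega
      rw [zero_sub, hvj j this]
    have e2 : (∏ j ∈ range (m+1), (X - C (v j))).coeff 1
        = ∑ k ∈ range (m+1), ∏ j ∈ (range (m+1)).erase k, -(h j ^ 2) := by
      rw [coeffOneProd]
      refine sum_congr rfl fun k hk => prod_congr rfl fun j hj => ?_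
      have : j ≠ m+1 := by have := mem_range.mp (mem_of_mem_erase hj); omega
      rw [hvj j this]
    have e3 : F.eval 0 = a * ∏ j ∈ range (m+1), -(μ j ^ 2) := by
      rw [hF, eval_sub, eval_mul, eval_mul, eval_add, eval_X, eval_C]
      have hRmu0 : Rmu.eval 0 = ∏ j ∈ range (m+1), -(μ j ^ 2) := by
        rw [hRmu, eval_prod]
        exact prod_congr rfl fun j _ => by simp
      rw [hRmu0]; ring
    rw [e1, e2, e3]
  rw [hco] at key
  conv at key => rhs; rw [sum_range_succ]
  rw [sum_congr rfl hterm, hlast] at key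
  -- convert signed products
  have cer : ∀ i ∈ range (m+1), ((range (m+1)).erase i).card = m := fun i hi => by
    rw [card_erase_of_mem hi, card_range]
    omega
  have hNμP : ∏ j ∈ range (m+1), -(μ j ^ 2) = (-1:ℝ)^(m+1) * Pμ := by
    rw [prodNeg, card_range, hPμ]
  have hNhP : ∏ j ∈ range (m+1), -(h j ^ 2) = (-1:ℝ)^(m+1) * E := by
    rw [prodNeg, card_range, hE]
  have hNμS : ∑ i ∈ range (m+1), ∏ j ∈ (range (m+1)).erase i, -(μ j ^ 2) = (-1:ℝ)^m * Sμ := by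
    rw [hSμ, mul_sum]
    exact sum_congr rfl fun i hi => by rw [prodNeg, cer i hi]
  have hNhS : ∑ i ∈ range (m+1), ∏ j ∈ (range (m+1)).erase i, -(h j ^ 2) = (-1:ℝ)^m * Sy := by
    rw [hSy, mul_sum]
    exact sum_congr rfl fun i hi => by rw [prodNeg, cer i hi]
  have hXS : ∑ i ∈ range (m+1), x i ^ 2 * ∏ j ∈ (range (m+1)).erase i, -(h j ^ 2)
      = (-1:ℝ)^m * (E * ∑ i ∈ range (m+1), x i ^ 2 / h i ^ 2) := by
    rw [mul_sum, mul_sum]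
    refine sum_congr rfl fun i hi => ?_
    rw [prodNeg, cer i hi]
    have e2 : E = h i ^ 2 * ∏ j ∈ (range (m+1)).erase i, h j ^ 2 :=
      (mul_prod_erase (range (m+1)) (fun j => h j ^ 2) hi).symm
    rw [e2]
    have := hy0 i (mem_range.mp hi)
    have hi0 : h i ≠ 0 := fun h0 => this (by rw [h0]; ring)
    field_simp
  rw [hNμP, hNhP, hNμS, hNhS, hXS] at key
  -- main identity
  have goal1 : ∑ i ∈ range (m+1), x i ^ 2 / h i ^ 2
      = 1 - (Pμ - a * Sμ) / E + Sy * (-(a * Pμ)) / E ^ 2 := by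
    rcases Nat.even_or_odd m with hp | hp
    · have s1 : ((-1:ℝ))^m = 1 := hp.neg_one_pow
      have s2 : ((-1:ℝ))^(m+1) = -1 := by rw [pow_succ, s1]; ring
      rw [s1, s2] at key
      field_simp at key ⊢
      linear_combination -key
    · have s1 : ((-1:ℝ))^m = -1 := hp.neg_one_pow
      have s2 : ((-1:ℝ))^(m+1) = 1 := by rw [pow_succ, s1]; ring
      rw [s1, s2] at key
      field_simp at key ⊢
      linear_combination key
  refine ⟨?_, ?_⟩
  · rw [hσ, hσn, hEsE, hEsSy]
    exact goal1
  · intro hμm hμm1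
    have hP0 : Pμ = 0 := by
      rw [hPμ]
      apply prod_eq_zero (i := m) (mem_range.mpr (by omega))
      simp [hμm]
    have ha0 : a = 0 := by rw [ha, hμm1]; ring
    refine ⟨?_, ?_⟩
    · rw [goal1, hP0, ha0]
      simp
    · rw [hxn]
      have : ∏ j ∈ range (m+2), μ j ^ 2 = 0 := by
        apply prod_eq_zero (i := m+1) (mem_range.mpr (by omega))
        simp [hμm1]
      rw [this, zero_div]
end

section
/- Let $S(y) = \prod_{j=1}^{n-1}(y+h_j^2)$ with $h_1,\dots,h_{n-1} > 0$ distinct. Then the polynomial equation $S(-y) - y\,S'(-y) = 0$ has exactly $n-1$ distinct positive real roots $p_1,\dots,p_{n-1}$, which interlace the $h_i^2$: $0 < p_{n-1} < h_{n-1}^2 < p_{n-2} < \cdots < h_2^2 < p_1 < h_1^2$. -/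
open Finset Polynomial

/-- The polynomial `S(y) = ∏_{j=1}^{n-1} (y + hⱼ²)`. -/
noncomputable def Spoly (n : ℕ) (h : ℕ → ℝ) : Polynomial ℝ :=
  ∏ j ∈ range (n-1), (X + C (h j ^ 2))

lemma ivt_aux {f : ℝ → ℝ} (hf : Continuous f) {x y : ℝ} (hxy : x < y)
    (hs : f x * f y < 0) : ∃ z, z ∈ Set.Ioo x y ∧ f z = 0 := by
  rcases mul_neg_iff.mp hs with ⟨hx, hy⟩ | ⟨hx, hy⟩
  · have h0 : (0:ℝ) ∈ Set.Ioo (f y) (f x) := ⟨hy, hx⟩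
    obtain ⟨z, hz, hz0⟩ := intermediate_value_Ioo' hxy.le hf.continuousOn h0
    exact ⟨z, hz, hz0⟩
  · have h0 : (0:ℝ) ∈ Set.Ioo (f x) (f y) := ⟨hx, hy⟩
    obtain ⟨z, hz, hz0⟩ := intermediate_value_Ioo hxy.le hf.continuousOn h0
    exact ⟨z, hz, hz0⟩

lemma fin_derivative_prod {ι : Type*} [DecidableEq ι] (s : Finset ι) (f : ι → Polynomial ℝ) :
    derivative (∏ j ∈ s, f j) = ∑ j ∈ s, (∏ k ∈ s.erase j, f k) * derivative (f j) := by
  classical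
  induction s using Finset.induction_on with
  | empty => simp
  | @insert x t hx ih =>
    rw [Finset.prod_insert hx, derivative_mul, ih, Finset.sum_insert hx,
      Finset.erase_insert hx, Finset.mul_sum]
    congr 1
    · exact mul_comm _ _
    apply Finset.sum_congr rfl
    intro j hj
    have hxj : x ≠ j := fun hxx => hx (hxx ▸ hj)
    rw [Finset.erase_insert_of_ne hxj, Finset.prod_insert (fun hc => hx (Finset.mem_of_mem_erase hc))]
    ring

lemma main_lemma (m : ℕ) (hm : 1 ≤ m) (a : ℕ → ℝ)
    (hpos : ∀ i < m, 0 < a i) (hdec : ∀ i j, i < j → j < m → a j < a i) :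
    ∃ p : ℕ → ℝ,
      (∀ i < m,
        (∏ j ∈ range m, (X + C (a j)) : Polynomial ℝ).eval (-(p i))
          - p i * (derivative (∏ j ∈ range m, (X + C (a j)) : Polynomial ℝ)).eval (-(p i)) = 0) ∧
      (∀ i < m, 0 < p i) ∧
      (∀ i < m, p i < a i) ∧
      (∀ i, i+1 < m → a (i+1) < p i) ∧
      (∀ y : ℝ, 0 < y →
        (∏ j ∈ range m, (X + C (a j)) : Polynomial ℝ).eval (-y)
          - y * (derivative (∏ j ∈ range m, (X + C (a j)) : Polynomial ℝ)).eval (-y) = 0 →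
        ∃ i < m, y = p i) := by
  set S : Polynomial ℝ := ∏ j ∈ range m, (X + C (a j)) with hS
  set F : ℝ → ℝ := fun y => S.eval (-y) - y * (derivative S).eval (-y) with hF
  have hevalS : ∀ x : ℝ, S.eval x = ∏ j ∈ range m, (x + a j) := by
    intro x; simp [hS, eval_prod]
  have hevalS' : ∀ x : ℝ, (derivative S).eval x
      = ∑ j ∈ range m, ∏ k ∈ (range m).erase j, (x + a k) := by
    intro x; rw [hS, fin_derivative_prod]; simp [eval_finset_sum, eval_prod]
  have hFcont : Continuous F := by
    apply Continuous.sub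
    · exact (Polynomial.continuous S).comp continuous_neg
    · exact continuous_id.mul ((Polynomial.continuous (derivative S)).comp continuous_neg)
  -- value at a i
  have hFa : ∀ i < m, ∃ c : ℝ, 0 < c ∧ F (a i) = (-1 : ℝ)^(m - i) * c := by
    intro i hi
    have h1 : S.eval (-(a i)) = 0 := by
      rw [hevalS]; exact Finset.prod_eq_zero (mem_range.mpr hi) (by ring)
    have h2 : (derivative S).eval (-(a i)) = ∏ k ∈ (range m).erase i, (a k - a i) := by
      rw [hevalS', Finset.sum_eq_single i]
      · exact Finset.prod_congr rfl (fun k _ => by ring)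
      · intro j hj hji
        exact Finset.prod_eq_zero (Finset.mem_erase.mpr ⟨hji.symm, mem_range.mpr hi⟩) (by ring)
      · intro hi'; exact absurd (mem_range.mpr hi) hi'
    have hsplit : (range m).erase i = range i ∪ Ico (i+1) m := by
      ext k; simp only [Finset.mem_erase, Finset.mem_range, Finset.mem_union, Finset.mem_Ico]
      omega
    have hdisj : Disjoint (range i) (Ico (i+1) m) := by
      rw [Finset.disjoint_left]; intro k hk hk'
      simp only [Finset.mem_range] at hk; simp only [Finset.mem_Ico] at hk'; omega
    have h3 : ∏ k ∈ (range m).erase i, (a k - a i)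
        = (∏ k ∈ range i, (a k - a i)) * ∏ k ∈ Ico (i+1) m, (a k - a i) := by
      rw [hsplit, Finset.prod_union hdisj]
    have h4 : ∏ k ∈ Ico (i+1) m, (a k - a i)
        = (-1:ℝ)^(m - 1 - i) * ∏ k ∈ Ico (i+1) m, (a i - a k) := by
      have e1 : ∏ k ∈ Ico (i+1) m, (a k - a i)
          = ∏ k ∈ Ico (i+1) m, ((-1) * (a i - a k)) :=
        Finset.prod_congr rfl (fun k _ => by ring)
      rw [e1, Finset.prod_mul_distrib, Finset.prod_const, Nat.card_Ico]
      congr 2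
      omega
    have hPlt : 0 < ∏ k ∈ range i, (a k - a i) :=
      Finset.prod_pos (fun k hk => sub_pos.mpr (hdec k i (mem_range.mp hk) hi))
    have hPgt : 0 < ∏ k ∈ Ico (i+1) m, (a i - a k) :=
      Finset.prod_pos (fun k hk => by
        rw [Finset.mem_Ico] at hk
        exact sub_pos.mpr (hdec i k hk.1 hk.2))
    refine ⟨a i * ((∏ k ∈ range i, (a k - a i)) * ∏ k ∈ Ico (i+1) m, (a i - a k)),
      mul_pos (hpos i hi) (mul_pos hPlt hPgt), ?_⟩
    have hmi : m - i = (m - 1 - i) + 1 := by omega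
    have : F (a i) = -(a i) * ((∏ k ∈ range i, (a k - a i))
        * ((-1:ℝ)^(m-1-i) * ∏ k ∈ Ico (i+1) m, (a i - a k))) := by
      rw [hF]; dsimp only; rw [h1, h2, h3, h4]; ring
    rw [this, hmi, pow_succ]; ring
  have hF0 : 0 < F 0 := by
    have : F 0 = ∏ j ∈ range m, a j := by
      rw [hF]; dsimp only; rw [hevalS]; simp
    rw [this]
    exact Finset.prod_pos (fun j hj => hpos j (mem_range.mp hj))
  -- endpoints
  set lo : ℕ → ℝ := fun i => if i = m - 1 then 0 else a (i+1) with hlo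
  have hlo_lt : ∀ i < m, lo i < a i := by
    intro i hi
    by_cases hcase : i = m - 1
    · simp [hlo, hcase]; subst hcase; exact hpos _ hi
    · simp [hlo, hcase]; exact hdec i (i+1) (by omega) (by omega)
  have hlo_nonneg : ∀ i < m, 0 ≤ lo i := by
    intro i hi
    by_cases hcase : i = m - 1
    · simp [hlo, hcase]
    · simp [hlo, hcase]; exact (hpos (i+1) (by omega)).le
  have hsign : ∀ i < m, F (lo i) * F (a i) < 0 := by
    intro i hi
    obtain ⟨c, hc, hFc⟩ := hFa i hi
    by_cases hcase : i = m - 1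
    · have hlo0 : lo i = 0 := by simp [hlo, hcase]
      have hmi1 : m - i = 1 := by omega
      rw [hlo0, hFc, hmi1, pow_one]
      nlinarith [hF0]
    · have hi1 : i + 1 < m := by omega
      obtain ⟨c', hc', hFc'⟩ := hFa (i+1) hi1
      have hloi : lo i = a (i+1) := by simp [hlo, hcase]
      rw [hloi, hFc, hFc']
      have hexp : (-1:ℝ)^(m - (i+1)) * (-1:ℝ)^(m - i) = -1 := by
        rw [← pow_add]
        have : m - (i+1) + (m - i) = 2*(m - i - 1) + 1 := by omega
        rw [this, pow_succ, pow_mul]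
        norm_num
      have : (-1:ℝ)^(m-(i+1)) * c' * ((-1:ℝ)^(m-i) * c)
          = ((-1:ℝ)^(m-(i+1)) * (-1:ℝ)^(m-i)) * (c' * c) := by ring
      rw [this, hexp]
      nlinarith
  have hex : ∀ i, i < m → ∃ z, z ∈ Set.Ioo (lo i) (a i) ∧ F z = 0 := by
    intro i hi
    exact ivt_aux hFcont (hlo_lt i hi) (hsign i hi)
  choose! p hmem hroot using hex
  have hppos : ∀ i < m, 0 < p i := fun i hi =>
    lt_of_le_of_lt (hlo_nonneg i hi) (hmem i hi).1
  have hplt : ∀ i < m, p i < a i := fun i hi => (hmem i hi).2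
  have hpgt : ∀ i, i+1 < m → a (i+1) < p i := by
    intro i hi1
    have hi : i < m := by omega
    have : lo i = a (i+1) := by
      have : i ≠ m - 1 := by omega
      simp [hlo, this]
    rw [← this]; exact (hmem i hi).1
  -- strict antitonicity hence injectivity
  have hanti : ∀ i j, i < j → j < m → p j < p i := by
    intro i j hij hjm
    have h1 : p j < a j := hplt j hjm
    have h2 : a j ≤ a (i+1) := by
      rcases eq_or_lt_of_le (Nat.succ_le_of_lt hij) with he | hl
      · subst he; exact le_rfl
      · exact (hdec (i+1) j hl hjm).le
    have h3 : a (i+1) < p i := hpgt i (by omega)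
    linarith
  refine ⟨p, fun i hi => hroot i hi, hppos, hplt, hpgt, ?_⟩
  -- uniqueness
  intro y hy hyroot
  by_contra hcon
  push_neg at hcon
  set Q : Polynomial ℝ := S.comp (-X) - X * (derivative S).comp (-X) with hQ
  have hFQ : ∀ x : ℝ, Q.eval x = F x := by
    intro x; simp [hQ, hF, eval_comp]
  have hQne : Q ≠ 0 := by
    intro h0
    have := hFQ 0
    rw [h0] at this
    simp at this
    rw [← this] at hF0
    exact lt_irrefl _ hF0
  have hSdeg : S.natDegree ≤ m := by
    have h1 : S.natDegree ≤ ∑ j ∈ range m, (X + C (a j)).natDegree := natDegree_prod_le _ _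
    have h2 : (∑ j ∈ range m, (X + C (a j)).natDegree) = m := by
      rw [Finset.sum_congr rfl (fun j _ => natDegree_X_add_C (a j))]; simp
    omega
  have hQdeg : Q.natDegree ≤ m := by
    apply le_trans (natDegree_sub_le _ _)
    apply max_le
    · calc (S.comp (-X)).natDegree ≤ S.natDegree * (-X : Polynomial ℝ).natDegree :=
          natDegree_comp_le
      _ ≤ m * 1 := by
          apply Nat.mul_le_mul hSdeg
          simp [natDegree_neg]
      _ = m := by ring
    · calc (X * (derivative S).comp (-X)).natDegree
          ≤ (X : Polynomial ℝ).natDegree + ((derivative S).comp (-X)).natDegree :=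
          natDegree_mul_le
      _ ≤ 1 + (derivative S).natDegree * (-X : Polynomial ℝ).natDegree := by
          apply add_le_add (natDegree_X_le) natDegree_comp_le
      _ ≤ 1 + (m - 1) * 1 := by
          apply add_le_add_right
          apply Nat.mul_le_mul
          · exact le_trans (natDegree_derivative_le S) (by omega)
          · simp [natDegree_neg]
      _ ≤ m := by omega
  -- the finset of roots
  have hmemroots : ∀ z : ℝ, F z = 0 → z ∈ Q.roots.toFinset := by
    intro z hz
    rw [Multiset.mem_toFinset, mem_roots hQne]
    rw [IsRoot, hFQ]; exact hz
  set T : Finset ℝ := insert y ((range m).image p) with hT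
  have hTsub : T ⊆ Q.roots.toFinset := by
    intro z hz
    rw [hT, Finset.mem_insert] at hz
    rcases hz with rfl | hz
    · exact hmemroots z hyroot
    · obtain ⟨i, hi, rfl⟩ := Finset.mem_image.mp hz
      exact hmemroots _ (hroot i (mem_range.mp hi))
  have hinj : Set.InjOn p (range m) := by
    intro i hi j hj hij
    simp only [coe_range, Set.mem_Iio] at hi hj
    by_contra hne
    rcases lt_or_gt_of_ne hne with hl | hl
    · exact absurd hij (ne_of_gt (hanti i j hl hj))
    · exact absurd hij (ne_of_lt (hanti j i hl hi))
  have hcardim : ((range m).image p).card = m := by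
    rw [Finset.card_image_of_injOn hinj, card_range]
  have hynotmem : y ∉ (range m).image p := by
    intro hmem'
    obtain ⟨i, hi, hpi⟩ := Finset.mem_image.mp hmem'
    exact hcon i (mem_range.mp hi) hpi.symm
  have hcardT : T.card = m + 1 := by
    rw [hT, Finset.card_insert_of_notMem hynotmem, hcardim]
  have : T.card ≤ m := by
    calc T.card ≤ Q.roots.toFinset.card := Finset.card_le_card hTsub
    _ ≤ Multiset.card Q.roots := Q.roots.toFinset_card_le
    _ ≤ Q.natDegree := Q.card_roots'
    _ ≤ m := hQdeg
  omega

/-- `S(-y) - y S'(-y) = 0` has exactly `n-1` distinct positive roots, interlacing the `hᵢ²`: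
`0 < p_{n-1} < h_{n-1}² < p_{n-2} < ⋯ < h₂² < p₁ < h₁²`. Indices are `0`-based. -/
theorem stmt_7 (n : ℕ) (hn : 3 ≤ n) (h : ℕ → ℝ)
    (hpos : ∀ i < n-1, 0 < h i)
    (hdec : ∀ i j, i < j → j < n-1 → h j < h i) :
    ∃ p : ℕ → ℝ,
      (∀ i < n-1,
        (Spoly n h).eval (-(p i)) - p i * (derivative (Spoly n h)).eval (-(p i)) = 0) ∧
      0 < p (n-2) ∧
      (∀ i < n-1, p i < h i ^ 2) ∧
      (∀ i, i+1 < n-1 → h (i+1) ^ 2 < p i) ∧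
      (∀ y : ℝ, 0 < y →
        (Spoly n h).eval (-y) - y * (derivative (Spoly n h)).eval (-y) = 0 →
        ∃ i < n-1, y = p i) := by
  obtain ⟨p, hroot, hppos, hplt, hpgt, huniq⟩ :=
    main_lemma (n-1) (by omega) (fun j => h j ^ 2)
      (fun i hi => pow_pos (hpos i hi) 2)
      (fun i j hij hj => by
        have := hdec i j hij hj
        have hj0 := hpos j (by omega)
        exact pow_lt_pow_left₀ this hj0.le (by norm_num))
  have hSp : Spoly n h = ∏ j ∈ range (n-1), (X + C ((fun j => h j ^ 2) j)) := rfl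
  refine ⟨p, ?_, ?_, ?_, ?_, ?_⟩
  · intro i hi; rw [hSp]; exact hroot i hi
  · exact hppos (n-2) (by omega)
  · exact hplt
  · exact hpgt
  · intro y hy hyr
    apply huniq y hy
    rw [← hSp]
    exact hyr
end

section
/- Let $S(y)=\prod_{j=1}^{n-1}(y+h_j^2)$, $h_j>0$ distinct, let $p_1,\dots,p_{n-1}$ be the roots of $S(-y)-yS'(-y)=0$, and fix $j \in \{1,\dots,n-1\}$. Then $$\frac{1}{n}\int_0^\infty \frac{1}{2u\sqrt{S(u^2)}}\cdot\frac{d}{du}\left(\frac{u^2 S(u^2)}{(u^2+h_j^2)\prod_{l=1}^{n-1}(u^2+p_l)}\right) du = \frac{1}{2}\int_0^\infty \frac{du}{(u^2+h_j^2)\sqrt{S(u^2)}}.$$ -/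
open Finset Polynomial MeasureTheory

open Filter Set

lemma aux_tendsto (A B : Polynomial ℝ) (f : ℝ → ℝ) (hdeg : A.degree < B.degree)
    (heq : ∀ u : ℝ, f u ^ 2 = A.eval u / B.eval u) :
    Tendsto f atTop (nhds 0) := by
  have h1 : Tendsto (fun u => f u ^ 2) atTop (nhds 0) := by
    have := Polynomial.div_tendsto_zero_of_degree_lt A B hdeg
    exact this.congr (fun u => (heq u).symm)
  have h2 : Tendsto (fun u => |f u|) atTop (nhds 0) := by
    have h3 := (Real.continuous_sqrt.tendsto 0).comp h1
    simp only [Function.comp_def, Real.sqrt_sq_eq_abs, Real.sqrt_zero] at h3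
    exact h3
  exact tendsto_zero_iff_abs_tendsto_zero f |>.mpr h2

lemma aux_int (g : ℝ → ℝ) (hc : ContinuousOn g (Set.Ici 0))
    (hb : Tendsto (fun u => u^2 * g u) atTop (nhds 0)) :
    IntegrableOn g (Set.Ioi (0:ℝ)) := by
  have hev : ∀ᶠ u in atTop, u^2 * |g u| < 1 := by
    have := hb.eventually (Metric.ball_mem_nhds (0:ℝ) one_pos)
    simpa [Real.dist_eq] using this
  obtain ⟨A, hA⟩ := eventually_atTop.mp hev
  set B := max A 1 with hB
  have hB1 : (1:ℝ) ≤ B := le_max_right _ _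
  have hB0 : (0:ℝ) < B := lt_of_lt_of_le one_pos hB1
  have h1 : IntegrableOn g (Set.Ioc 0 B) := by
    have h0 : IntegrableOn g (Set.Icc 0 B) volume :=
      (hc.mono (Set.Icc_subset_Ici_self : Set.Icc (0:ℝ) B ⊆ Set.Ici 0)).integrableOn_Icc
    exact h0.mono_set Set.Ioc_subset_Icc_self
  have h2 : IntegrableOn g (Set.Ioi B) := by
    have hmaj : IntegrableOn (fun u : ℝ => u ^ (-2 : ℝ)) (Set.Ioi B) :=
      integrableOn_Ioi_rpow_of_lt (by norm_num) hB0
    apply Integrable.mono' hmaj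
    · exact (hc.mono (fun x hx => le_of_lt (lt_of_lt_of_le hB0 (le_of_lt hx)))).aestronglyMeasurable measurableSet_Ioi
    · refine (ae_restrict_iff' measurableSet_Ioi).mpr (Filter.Eventually.of_forall ?_)
      intro u hu
      have hu0 : (0:ℝ) < u := lt_trans hB0 hu
      have h4 : u^2 * |g u| < 1 := hA u (le_of_lt (lt_of_le_of_lt (le_max_left A 1) hu))
      have h5 : u ^ (-2:ℝ) = (u^2)⁻¹ := by
        rw [show (-2:ℝ) = -(2:ℕ) by norm_num, Real.rpow_neg hu0.le, Real.rpow_natCast]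
      rw [h5, Real.norm_eq_abs]
      calc |g u| ≤ 1 / u^2 := (le_div_iff₀' (by positivity : (0:ℝ) < u^2)).mpr h4.le
        _ = (u^2)⁻¹ := one_div _
  have : IntegrableOn g (Set.Ioc 0 B ∪ Set.Ioi B) := h1.union h2
  rwa [Set.Ioc_union_Ioi_eq_Ioi hB0.le] at this


lemma aux_natDegree_prod (m : ℕ) (a : ℕ → ℝ) :
    (∏ l ∈ range m, (X + C (a l)) : ℝ[X]).natDegree = m := by
  rw [natDegree_prod _ _ (fun i _ => (monic_X_add_C (a i)).ne_zero)]
  simp [natDegree_X_add_C]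

lemma aux_monic_prod (m : ℕ) (a : ℕ → ℝ) :
    (∏ l ∈ range m, (X + C (a l)) : ℝ[X]).Monic :=
  monic_prod_of_monic _ _ (fun i _ => monic_X_add_C (a i))

lemma aux_key (m : ℕ) (hm : 1 ≤ m) (h p : ℕ → ℝ)
    (hroot : ∀ i < m, (∏ l ∈ range m, (X + C (h l ^ 2)) : ℝ[X]).eval (-(p i))
      - p i * (derivative (∏ l ∈ range m, (X + C (h l ^ 2)) : ℝ[X])).eval (-(p i)) = 0)
    (hpdist : ∀ i ∈ range m, ∀ j ∈ range m, i ≠ j → p i ≠ p j) :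
    (∏ l ∈ range m, (X + C (h l ^ 2)) : ℝ[X])
        + X * derivative (∏ l ∈ range m, (X + C (h l ^ 2)))
      = C ((m : ℝ) + 1) * ∏ l ∈ range m, (X + C (p l)) := by
  set Sp : ℝ[X] := ∏ l ∈ range m, (X + C (h l ^ 2)) with hSp
  set Q : ℝ[X] := ∏ l ∈ range m, (X + C (p l)) with hQ
  have hmonic : Sp.Monic := aux_monic_prod m _
  have hdeg : Sp.natDegree = m := aux_natDegree_prod m _
  have hQmonic : Q.Monic := aux_monic_prod m _
  have hQdeg : Q.natDegree = m := aux_natDegree_prod m _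
  set D : ℝ[X] := (Sp + X * derivative Sp) - C ((m : ℝ) + 1) * Q with hD
  have hA : Sp + X * derivative Sp = derivative (X * Sp) := by
    rw [derivative_mul, derivative_X, one_mul]
  have hcoeff : ∀ k, m ≤ k → D.coeff k = 0 := by
    intro k hk
    have h1 : (Sp + X * derivative Sp).coeff k = Sp.coeff k * (k + 1) := by
      rw [hA, coeff_derivative, coeff_X_mul]
    have h2 : (C ((m : ℝ) + 1) * Q).coeff k = ((m : ℝ) + 1) * Q.coeff k := coeff_C_mul _
    rcases eq_or_lt_of_le hk with rfl | hlt
    · have e1 : Sp.coeff m = 1 := by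
        have := hmonic.coeff_natDegree; rwa [hdeg] at this
      have e2 : Q.coeff m = 1 := by
        have := hQmonic.coeff_natDegree; rwa [hQdeg] at this
      rw [hD, coeff_sub, h1, h2, e1, e2]
      ring
    · have e1 : Sp.coeff k = 0 := coeff_eq_zero_of_natDegree_lt (by omega)
      have e2 : Q.coeff k = 0 := coeff_eq_zero_of_natDegree_lt (by omega)
      rw [hD, coeff_sub, h1, h2, e1, e2]
      ring
  have hDdeg : D.natDegree < m := by
    rcases eq_or_ne D 0 with h0 | h0
    · rw [h0, natDegree_zero]; omega
    · by_contra hlt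
      push_neg at hlt
      exact h0 (leadingCoeff_eq_zero.mp (hcoeff _ hlt))
  have hzero : D = 0 := by
    apply eq_zero_of_natDegree_lt_card_of_eval_eq_zero' D ((range m).image (fun i => -(p i)))
    · intro x hx
      simp only [Finset.mem_image, Finset.mem_range] at hx
      obtain ⟨i, hi, rfl⟩ := hx
      have he := hroot i hi
      have hQz : Q.eval (-(p i)) = 0 := by
        rw [hQ, eval_prod]
        apply Finset.prod_eq_zero (Finset.mem_range.mpr hi)
        simp
      simp only [hD, eval_sub, eval_add, eval_mul, eval_X, eval_C, hQz, mul_zero, sub_zero]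
      linarith
    · rw [Finset.card_image_of_injOn]
      · rwa [Finset.card_range]
      · intro a ha b hb hab
        by_contra hne
        exact hpdist a ha b hb hne (by linarith [neg_injective hab])
  have := sub_eq_zero.mp hzero
  exact this

set_option maxHeartbeats 2000000 in
/-- Integration by parts identity (using `d/dy (yS(y)) = n ∏(y+p_l)`):
`(1/n)∫₀^∞ (2u√S(u²))⁻¹ d/du (u²S(u²)/((u²+hⱼ²)∏(u²+p_l))) du
  = (1/2)∫₀^∞ du/((u²+hⱼ²)√S(u²))`. -/
theorem stmt_13 (n : ℕ) (hn : 3 ≤ n) (h : ℕ → ℝ)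
    (hpos : ∀ j < n-1, 0 < h j)
    (hdist : ∀ i ∈ range (n-1), ∀ j ∈ range (n-1), i ≠ j → h i ≠ h j)
    (p : ℕ → ℝ) (hppos : ∀ i < n-1, 0 < p i)
    (hroot : ∀ i < n-1,
      (Spoly n h).eval (-(p i)) - p i * (derivative (Spoly n h)).eval (-(p i)) = 0)
    (hpdist : ∀ i ∈ range (n-1), ∀ j ∈ range (n-1), i ≠ j → p i ≠ p j)
    (j : ℕ) (hj : j < n-1) :
    (1 / (n : ℝ)) * ∫ u in Set.Ioi (0:ℝ),
        (2 * u * Real.sqrt ((Spoly n h).eval (u^2)))⁻¹ *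
          deriv (fun v : ℝ => v^2 * (Spoly n h).eval (v^2) /
            ((v^2 + h j ^ 2) * ∏ l ∈ range (n-1), (v^2 + p l))) u
      = (1/2) * ∫ u in Set.Ioi (0:ℝ),
          ((u^2 + h j ^ 2) * Real.sqrt ((Spoly n h).eval (u^2)))⁻¹ := by
  obtain ⟨m, rfl⟩ : ∃ m, n = m + 1 := ⟨n - 1, by omega⟩
  have hm : 2 ≤ m := by omega
  simp only [Nat.add_sub_cancel] at hpos hdist hppos hroot hpdist hj ⊢
  set Sp : ℝ[X] := Spoly (m+1) h with hSpdef
  set Q : ℝ[X] := ∏ l ∈ range m, (X + C (p l)) with hQdef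
  have hSpP : Sp = ∏ l ∈ range m, (X + C (h l ^ 2)) := by
    rw [hSpdef, Spoly]; norm_num
  have hSmonic : Sp.Monic := by
    rw [hSpP]; exact monic_prod_of_monic _ _ (fun i _ => monic_X_add_C _)
  have hQmonic : Q.Monic := monic_prod_of_monic _ _ (fun i _ => monic_X_add_C _)
  have hSd : Sp.natDegree = m := by rw [hSpP]; exact aux_natDegree_prod m _
  have hQd : Q.natDegree = m := aux_natDegree_prod m _
  have hSpEval : ∀ x : ℝ, Sp.eval x = ∏ l ∈ range m, (x + h l ^ 2) := by
    intro x; rw [hSpP, eval_prod]; simp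
  have hQEval : ∀ x : ℝ, Q.eval x = ∏ l ∈ range m, (x + p l) := by
    intro x; rw [hQdef, eval_prod]; simp
  have hs_pos : ∀ x : ℝ, 0 ≤ x → 0 < Sp.eval x := by
    intro x hx
    rw [hSpEval]
    apply Finset.prod_pos
    intro l hl
    have := hpos l (mem_range.mp hl)
    nlinarith [sq_nonneg (h l)]
  have hq_pos : ∀ x : ℝ, 0 ≤ x → 0 < Q.eval x := by
    intro x hx
    rw [hQEval]
    apply Finset.prod_pos
    intro l hl
    have := hppos l (mem_range.mp hl)
    linarith
  -- key polynomial identity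
  have hkey : Sp + X * derivative Sp = C ((m : ℝ) + 1) * Q := by
    rw [hSpP, hQdef]
    apply aux_key m (by omega) h p
    · intro i hi
      have := hroot i hi
      rwa [hSpP] at this
    · exact hpdist
  have hkeyE : ∀ y : ℝ, Sp.eval y + y * (derivative Sp).eval y = ((m:ℝ)+1) * Q.eval y := by
    intro y
    have := congrArg (eval y) hkey
    simpa using this
  -- rewrite the function under deriv
  have hF0 : (fun v : ℝ => v^2 * Sp.eval (v^2) / ((v^2 + h j ^ 2) * ∏ l ∈ range m, (v^2 + p l)))
      = fun v : ℝ => v^2 * Sp.eval (v^2) / ((v^2 + h j ^ 2) * Q.eval (v^2)) := by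
    funext v; rw [hQEval]
  rw [hF0]
  set H : ℝ := h j ^ 2 with hHdef
  have hH : 0 < H := by have := hpos j hj; positivity
  set F : ℝ → ℝ := fun v : ℝ => v^2 * Sp.eval (v^2) / ((v^2 + H) * Q.eval (v^2)) with hFdef
  -- basic derivatives
  have hu2 : ∀ u : ℝ, HasDerivAt (fun v : ℝ => v^2) (2*u) u := fun u => by
    simpa using hasDerivAt_pow 2 u
  have hs2 : ∀ u : ℝ, HasDerivAt (fun v : ℝ => Sp.eval (v^2))
      ((derivative Sp).eval (u^2) * (2*u)) u :=
    fun u => (Sp.hasDerivAt (u^2)).comp (h := fun v : ℝ => v^2) u (hu2 u)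
  have hq2 : ∀ u : ℝ, HasDerivAt (fun v : ℝ => Q.eval (v^2))
      ((derivative Q).eval (u^2) * (2*u)) u :=
    fun u => (Q.hasDerivAt (u^2)).comp (h := fun v : ℝ => v^2) u (hu2 u)
  have hDne : ∀ u : ℝ, ((u^2 + H) * Q.eval (u^2)) ≠ 0 := by
    intro u
    have h1 : 0 < u^2 + H := by positivity
    have h2 : 0 < Q.eval (u^2) := hq_pos _ (sq_nonneg u)
    positivity
  have hFder : ∀ u : ℝ, HasDerivAt F
      (((2*u * Sp.eval (u^2) + u^2 * ((derivative Sp).eval (u^2) * (2*u))) * ((u^2 + H) * Q.eval (u^2))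
        - (u^2 * Sp.eval (u^2)) * (2*u * Q.eval (u^2) + (u^2 + H) * ((derivative Q).eval (u^2) * (2*u))))
        / ((u^2 + H) * Q.eval (u^2))^2) u := by
    intro u
    exact ((hu2 u).mul (hs2 u)).div (((hu2 u).add_const H).mul (hq2 u)) (hDne u)
  -- Φ and its derivative
  set Φ : ℝ → ℝ := fun u => u * Real.sqrt (Sp.eval (u^2)) / (2 * (u^2 + H) * Q.eval (u^2)) with hΦdef
  set R : ℝ → ℝ := fun u => ((u^2 + H) * Real.sqrt (Sp.eval (u^2)))⁻¹ with hRdef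
  set ψ : ℝ → ℝ := fun u => (2 * u * Real.sqrt (Sp.eval (u^2)))⁻¹ * deriv F u with hψdef
  have hΦderiv : ∀ u ∈ Set.Ioi (0:ℝ), HasDerivAt Φ (ψ u - (((m:ℝ)+1)/2) * R u) u := by
    intro u hu
    have hu0 : (0:ℝ) < u := hu
    have hsy : 0 < Sp.eval (u^2) := hs_pos _ (sq_nonneg u)
    have hr : 0 < Real.sqrt (Sp.eval (u^2)) := Real.sqrt_pos.mpr hsy
    have hqy : 0 < Q.eval (u^2) := hq_pos _ (sq_nonneg u)
    have hsqrt : HasDerivAt (fun v : ℝ => Real.sqrt (Sp.eval (v^2)))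
        (1 / (2 * Real.sqrt (Sp.eval (u^2))) * ((derivative Sp).eval (u^2) * (2*u))) u :=
      (Real.hasDerivAt_sqrt hsy.ne').comp u (hs2 u)
    have h2v : HasDerivAt (fun v : ℝ => 2*v) 2 u := by
      simpa using (hasDerivAt_id u).const_mul (2:ℝ)
    have hGin : HasDerivAt (fun v : ℝ => 2 * v * Real.sqrt (Sp.eval (v^2)))
        (2 * Real.sqrt (Sp.eval (u^2)) + 2*u*(1 / (2 * Real.sqrt (Sp.eval (u^2))) * ((derivative Sp).eval (u^2) * (2*u)))) u :=
      h2v.mul hsqrt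
    have hGne : 2 * u * Real.sqrt (Sp.eval (u^2)) ≠ 0 := by positivity
    have hGder : HasDerivAt (fun v : ℝ => (2 * v * Real.sqrt (Sp.eval (v^2)))⁻¹)
        (-(2 * Real.sqrt (Sp.eval (u^2)) + 2*u*(1 / (2 * Real.sqrt (Sp.eval (u^2))) * ((derivative Sp).eval (u^2) * (2*u))))
          / (2*u*Real.sqrt (Sp.eval (u^2)))^2) u := hGin.inv hGne
    have hGF := hGder.mul (hFder u)
    have hev : Φ =ᶠ[nhds u] fun v => (2 * v * Real.sqrt (Sp.eval (v^2)))⁻¹ * F v := by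
      filter_upwards [isOpen_Ioi.mem_nhds hu] with v hv
      have hv0 : (0:ℝ) < v := hv
      have hsv : 0 < Sp.eval (v^2) := hs_pos _ (sq_nonneg v)
      have hrv : 0 < Real.sqrt (Sp.eval (v^2)) := Real.sqrt_pos.mpr hsv
      have hqv : 0 < Q.eval (v^2) := hq_pos _ (sq_nonneg v)
      have hr2 : Real.sqrt (Sp.eval (v^2)) ^ 2 = Sp.eval (v^2) := Real.sq_sqrt hsv.le
      have hHv : 0 < v^2 + H := by positivity
      simp only [hΦdef, hFdef]
      field_simp
      linear_combination hr2
    have hΦd := hGF.congr_of_eventuallyEq hev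
    refine hΦd.congr_deriv ?_
    symm
    rw [hψdef, hRdef]
    simp only [hFdef]
    rw [(hFder u).deriv]
    have hb : eval (u^2) (derivative Sp) = (((m:ℝ)+1) * eval (u^2) Q - eval (u^2) Sp) / u^2 := by
      have hk := hkeyE (u^2)
      field_simp
      linarith
    have hr2 : Real.sqrt (eval (u^2) Sp) ^ 2 = eval (u^2) Sp := Real.sq_sqrt hsy.le
    set a : ℝ := eval (u^2) Sp with ha
    set r : ℝ := Real.sqrt a with hrdef
    set c : ℝ := eval (u^2) Q with hc
    set d : ℝ := eval (u^2) (derivative Q) with hd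
    rw [hb, ← hr2]
    have hune : u ≠ 0 := hu0.ne'
    have hrne : r ≠ 0 := hr.ne'
    have hcne : c ≠ 0 := hqy.ne'
    have hHne : u^2 + H ≠ 0 := by positivity
    field_simp
    ring
  -- ψ explicit formula
  set Pp : ℝ[X] := C ((m:ℝ)+1) * ((X + C H) * Q^2) - X * Sp * (Q + (X + C H) * derivative Q) with hPpdef
  set ψt : ℝ → ℝ := fun u => Pp.eval (u^2) / (Real.sqrt (Sp.eval (u^2)) * ((u^2 + H) * Q.eval (u^2))^2) with hψtdef
  have hψeq : ∀ u ∈ Set.Ioi (0:ℝ), ψ u = ψt u := by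
    intro u hu
    have hu0 : (0:ℝ) < u := hu
    have hsy : 0 < Sp.eval (u^2) := hs_pos _ (sq_nonneg u)
    have hr : 0 < Real.sqrt (Sp.eval (u^2)) := Real.sqrt_pos.mpr hsy
    have hqy : 0 < Q.eval (u^2) := hq_pos _ (sq_nonneg u)
    have hr2 : Real.sqrt (Sp.eval (u^2)) ^ 2 = Sp.eval (u^2) := Real.sq_sqrt hsy.le
    have hHu : 0 < u^2 + H := by positivity
    have hkk := hkeyE (u^2)
    rw [hψdef, hψtdef]
    simp only
    rw [(hFder u).deriv, hPpdef]
    simp only [eval_sub, eval_mul, eval_add, eval_X, eval_C, eval_pow]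
    have hb : eval (u^2) (derivative Sp) = (((m:ℝ)+1) * eval (u^2) Q - eval (u^2) Sp) / u^2 := by
      have hk := hkeyE (u^2)
      field_simp
      linarith
    set a : ℝ := eval (u^2) Sp with ha
    set r : ℝ := Real.sqrt a with hrdef
    set c : ℝ := eval (u^2) Q with hc
    set d : ℝ := eval (u^2) (derivative Q) with hd
    rw [hb, ← hr2]
    have hune : u ≠ 0 := hu0.ne'
    have hrne : r ≠ 0 := hr.ne'
    have hcne : c ≠ 0 := hqy.ne'
    have hHne : u^2 + H ≠ 0 := by positivity
    field_simp
    ring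
  -- global facts
  have hrcont : Continuous fun u : ℝ => Real.sqrt (Sp.eval (u^2)) :=
    Real.continuous_sqrt.comp (Sp.continuous.comp (continuous_pow 2))
  have hrpos : ∀ u : ℝ, 0 < Real.sqrt (Sp.eval (u^2)) :=
    fun u => Real.sqrt_pos.mpr (hs_pos _ (sq_nonneg u))
  have hqposu : ∀ u : ℝ, 0 < Q.eval (u^2) := fun u => hq_pos _ (sq_nonneg u)
  have hHpos : ∀ u : ℝ, 0 < u^2 + H := fun u => by positivity
  have hr2' : ∀ u : ℝ, Real.sqrt (Sp.eval (u^2)) ^ 2 = Sp.eval (u^2) :=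
    fun u => Real.sq_sqrt (hs_pos _ (sq_nonneg u)).le
  -- R is integrable
  have hRcont : Continuous R := by
    rw [hRdef]
    apply Continuous.inv₀
    · exact ((continuous_pow 2).add continuous_const).mul hrcont
    · intro u; exact (mul_pos (hHpos u) (hrpos u)).ne'
  have hSpcompne : Sp.comp (X^2) ≠ 0 := by
    intro hc
    have h0 := congrArg (eval 0) hc
    rw [eval_comp] at h0
    simp only [eval_pow, eval_X, eval_zero] at h0
    exact (hs_pos (0^2) (by positivity)).ne' h0
  have hQcompne : Q.comp (X^2) ≠ 0 := by
    intro hc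
    have h0 := congrArg (eval 0) hc
    rw [eval_comp] at h0
    simp only [eval_pow, eval_X, eval_zero] at h0
    exact (hq_pos (0^2) (by positivity)).ne' h0
  have hX2ne : (X^2 + C H : ℝ[X]) ≠ 0 := X_pow_add_C_ne_zero (by norm_num) H
  have hcompS : (Sp.comp (X^2)).natDegree = 2*m := by
    rw [natDegree_comp, hSd, natDegree_X_pow]
    ring
  have hRtend : Tendsto (fun u : ℝ => u^2 * R u) atTop (nhds 0) := by
    apply aux_tendsto (X^4) (((X^2 + C H)^2) * (Sp.comp (X^2)))
    · -- degree
      have hBne : (((X^2 + C H)^2) * (Sp.comp (X^2)) : ℝ[X]) ≠ 0 :=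
        mul_ne_zero (pow_ne_zero _ hX2ne) hSpcompne
      have hBd : ((((X^2 + C H)^2) * (Sp.comp (X^2))) : ℝ[X]).natDegree = 4 + 2*m := by
        rw [natDegree_mul (pow_ne_zero _ hX2ne) hSpcompne, natDegree_pow,
          natDegree_X_pow_add_C, hcompS]
      rw [degree_eq_natDegree hBne, hBd, degree_X_pow]
      exact_mod_cast (by omega : 4 < 4 + 2*m)
    · intro u
      rw [hRdef]
      simp only [eval_mul, eval_pow, eval_add, eval_X, eval_C, eval_comp]
      rw [← hr2' u]
      have h1 : Real.sqrt (Sp.eval (u^2)) ≠ 0 := (hrpos u).ne'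
      have h2 : u^2 + H ≠ 0 := (hHpos u).ne'
      field_simp
      rw [Real.sqrt_sq (hrpos u).le]
  have hRint : IntegrableOn R (Set.Ioi (0:ℝ)) := aux_int R hRcont.continuousOn hRtend
  -- ψt is integrable
  have hψtcont : Continuous ψt := by
    rw [hψtdef]
    apply Continuous.div
    · exact Pp.continuous.comp (continuous_pow 2)
    · exact hrcont.mul ((((continuous_pow 2).add continuous_const).mul
        (Q.continuous.comp (continuous_pow 2))).pow 2)
    · intro u
      have := hrpos u
      have := hqposu u
      have := hHpos u
      positivity
  have hPpd : Pp.natDegree ≤ 2*m+1 := by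
    rw [hPpdef]
    apply le_trans (natDegree_sub_le _ _)
    apply max_le
    · refine le_trans natDegree_mul_le ?_
      refine le_trans (Nat.add_le_add_left natDegree_mul_le _) ?_
      rw [natDegree_C, natDegree_X_add_C, natDegree_pow, hQd]
      omega
    · refine le_trans natDegree_mul_le ?_
      refine le_trans (add_le_add natDegree_mul_le (natDegree_add_le _ _)) ?_
      rw [natDegree_X, hSd, hQd]
      have hdQ : (derivative Q).natDegree ≤ m - 1 := hQd ▸ natDegree_derivative_le Q
      have hXQ : ((X + C H) * derivative Q).natDegree ≤ 1 + (m-1) :=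
        natDegree_mul_le.trans (by rw [natDegree_X_add_C]; omega)
      omega
  have hψttend : Tendsto (fun u : ℝ => u^2 * ψt u) atTop (nhds 0) := by
    apply aux_tendsto (X^4 * (Pp.comp (X^2))^2)
      ((Sp.comp (X^2)) * ((X^2 + C H) * (Q.comp (X^2)))^4)
    · -- degree
      have hfac : ((X^2 + C H) * (Q.comp (X^2)) : ℝ[X]) ≠ 0 := mul_ne_zero hX2ne hQcompne
      have hBne : ((Sp.comp (X^2)) * ((X^2 + C H) * (Q.comp (X^2)))^4 : ℝ[X]) ≠ 0 :=
        mul_ne_zero hSpcompne (pow_ne_zero _ hfac)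
      have hBd : (((Sp.comp (X^2)) * ((X^2 + C H) * (Q.comp (X^2)))^4) : ℝ[X]).natDegree
          = 10*m + 8 := by
        rw [natDegree_mul hSpcompne (pow_ne_zero _ hfac), natDegree_pow,
          natDegree_mul hX2ne hQcompne, natDegree_X_pow_add_C, hcompS,
          natDegree_comp, hQd, natDegree_X_pow]
        ring
      have hAd : ((X^4 * (Pp.comp (X^2))^2) : ℝ[X]).natDegree ≤ 8*m + 8 := by
        refine le_trans natDegree_mul_le ?_
        rw [natDegree_X_pow]
        have : ((Pp.comp (X^2))^2 : ℝ[X]).natDegree ≤ 2*(2*(2*m+1)) := by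
          refine le_trans natDegree_pow_le ?_
          refine Nat.mul_le_mul_left _ (le_trans natDegree_comp_le ?_)
          rw [natDegree_X_pow]
          omega
        omega
      calc ((X^4 * (Pp.comp (X^2))^2) : ℝ[X]).degree
          ≤ ((8*m+8 : ℕ) : WithBot ℕ) :=
            le_trans degree_le_natDegree (by exact_mod_cast hAd)
        _ < ((10*m+8 : ℕ) : WithBot ℕ) := by exact_mod_cast (by omega : 8*m+8 < 10*m+8)
        _ = _ := by rw [degree_eq_natDegree hBne, hBd]
    · intro u
      rw [hψtdef]
      simp only [eval_mul, eval_pow, eval_add, eval_X, eval_C, eval_comp]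
      rw [← hr2' u]
      have h1 : Real.sqrt (Sp.eval (u^2)) ≠ 0 := (hrpos u).ne'
      have h2 : u^2 + H ≠ 0 := (hHpos u).ne'
      have h3 : Q.eval (u^2) ≠ 0 := (hqposu u).ne'
      field_simp
      rw [Real.sqrt_sq (hrpos u).le]
  have hψtint : IntegrableOn ψt (Set.Ioi (0:ℝ)) := aux_int ψt hψtcont.continuousOn hψttend
  have hψint : IntegrableOn ψ (Set.Ioi (0:ℝ)) :=
    hψtint.congr_fun (fun u hu => (hψeq u hu).symm) measurableSet_Ioi
  -- Φ limits
  have hΦ0 : Φ 0 = 0 := by rw [hΦdef]; simp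
  have hΦcont : Continuous Φ := by
    rw [hΦdef]
    apply Continuous.div
    · exact continuous_id.mul hrcont
    · exact (continuous_const.mul ((continuous_pow 2).add continuous_const)).mul
        (Q.continuous.comp (continuous_pow 2))
    · intro u
      have := hqposu u
      have := hHpos u
      positivity
  have hΦtend : Tendsto Φ atTop (nhds 0) := by
    apply aux_tendsto (X^2 * Sp.comp (X^2)) (C 4 * ((X^2 + C H) * Q.comp (X^2))^2)
    · have hfac : ((X^2 + C H) * (Q.comp (X^2)) : ℝ[X]) ≠ 0 := mul_ne_zero hX2ne hQcompne
      have hBne : (C 4 * ((X^2 + C H) * Q.comp (X^2))^2 : ℝ[X]) ≠ 0 :=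
        mul_ne_zero (by norm_num) (pow_ne_zero _ hfac)
      have hBd : ((C 4 * ((X^2 + C H) * Q.comp (X^2))^2) : ℝ[X]).natDegree = 4*m + 4 := by
        rw [natDegree_mul (by norm_num : (C 4 : ℝ[X]) ≠ 0) (pow_ne_zero _ hfac), natDegree_C,
          natDegree_pow, natDegree_mul hX2ne hQcompne, natDegree_X_pow_add_C,
          natDegree_comp, hQd, natDegree_X_pow]
        ring
      have hAd : ((X^2 * Sp.comp (X^2)) : ℝ[X]).natDegree ≤ 2*m + 2 := by
        refine le_trans natDegree_mul_le ?_
        rw [natDegree_X_pow, hcompS]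
        omega
      calc ((X^2 * Sp.comp (X^2)) : ℝ[X]).degree
          ≤ ((2*m+2 : ℕ) : WithBot ℕ) :=
            le_trans degree_le_natDegree (by exact_mod_cast hAd)
        _ < ((4*m+4 : ℕ) : WithBot ℕ) := by exact_mod_cast (by omega : 2*m+2 < 4*m+4)
        _ = _ := by rw [degree_eq_natDegree hBne, hBd]
    · intro u
      rw [hΦdef]
      simp only [eval_mul, eval_pow, eval_add, eval_X, eval_C, eval_comp]
      rw [← hr2' u]
      have h1 : Real.sqrt (Sp.eval (u^2)) ≠ 0 := (hrpos u).ne'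
      have h2 : u^2 + H ≠ 0 := (hHpos u).ne'
      have h3 : Q.eval (u^2) ≠ 0 := (hqposu u).ne'
      field_simp
      rw [Real.sqrt_sq (hrpos u).le]
      ring
  -- FTC
  have hint : IntegrableOn (fun u => ψ u - (((m:ℝ)+1)/2) * R u) (Set.Ioi (0:ℝ)) :=
    hψint.sub (hRint.const_mul _)
  have hFTC : ∫ u in Set.Ioi (0:ℝ), (ψ u - (((m:ℝ)+1)/2) * R u) = 0 - Φ 0 :=
    integral_Ioi_of_hasDerivAt_of_tendsto hΦcont.continuousWithinAt hΦderiv hint hΦtend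
  have hsplit : ∫ u in Set.Ioi (0:ℝ), ψ u
      = (((m:ℝ)+1)/2) * ∫ u in Set.Ioi (0:ℝ), R u := by
    have h1 : ∫ u in Set.Ioi (0:ℝ), (ψ u - (((m:ℝ)+1)/2) * R u)
        = (∫ u in Set.Ioi (0:ℝ), ψ u) - ∫ u in Set.Ioi (0:ℝ), ((((m:ℝ)+1)/2) * R u) :=
      integral_sub hψint (hRint.const_mul _)
    have h2 : ∫ u in Set.Ioi (0:ℝ), ((((m:ℝ)+1)/2) * R u)
        = (((m:ℝ)+1)/2) * ∫ u in Set.Ioi (0:ℝ), R u := integral_const_mul _ _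
    rw [hΦ0] at hFTC
    rw [h1, h2] at hFTC
    linarith
  have final : (1 / ((m:ℝ)+1)) * ∫ u in Set.Ioi (0:ℝ), ψ u
      = (1/2) * ∫ u in Set.Ioi (0:ℝ), R u := by
    rw [hsplit]
    have : ((m:ℝ)+1) ≠ 0 := by positivity
    field_simp
  have hcast : ((m+1 : ℕ) : ℝ) = (m:ℝ) + 1 := by push_cast; ring
  rw [hcast]
  exact final
end

section
/- Let $-2a_i = \partial\Phi/\partial h_i$ where $\Phi(h_1,\dots,h_{n-1}) = \int_0^\infty \frac{du}{\sqrt{\prod_{k=1}^{n-1}(u^2+h_k^2)}}$. Then the Hessian of $\Phi$ with respect to $(h_1,\dots,h_{n-1})$ is positive definite on the positive cone $\{h_i > 0\}$; consequently the map $(h_1,\dots,h_{n-1}) \mapsto (a_1,\dots,a_{n-1})$ is injective on the positive cone. -/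
open Finset MeasureTheory

open Set

/-- `Φ(h) = ∫₀^∞ du/√(∏_k (u² + h_k²))` as a function on `Fin m → ℝ`. -/
noncomputable def Phi (m : ℕ) : (Fin m → ℝ) → ℝ :=
  fun h => ∫ u in Set.Ioi (0:ℝ), (Real.sqrt (∏ k, (u^2 + h k ^ 2)))⁻¹



namespace S17

/-- scalar factor -/
noncomputable def q (u x : ℝ) : ℝ := (Real.sqrt (u^2 + x^2))⁻¹

/-- the integrand -/
noncomputable def g (m : ℕ) (u : ℝ) (h : Fin m → ℝ) : ℝ := ∏ k, q u (h k)

lemma q_pos {u x : ℝ} (hc : 0 < u^2 + x^2) : 0 < q u x :=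
  inv_pos.2 (Real.sqrt_pos.2 hc)

lemma q_nonneg (u x : ℝ) : 0 ≤ q u x := inv_nonneg.2 (Real.sqrt_nonneg _)

lemma q_symm (u x : ℝ) : q u x = q x u := by rw [q, q, add_comm]

lemma q_sq {u x : ℝ} : (q u x)^2 = (u^2 + x^2)⁻¹ := by
  rw [q, inv_pow, Real.sq_sqrt (by positivity)]

lemma q_le_q {u x y : ℝ} (hy : 0 < y) (hxy : y ≤ x) : q u x ≤ q u y := by
  apply inv_anti₀ (Real.sqrt_pos.2 (by positivity))
  exact Real.sqrt_le_sqrt (by nlinarith)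

lemma g_pos {m : ℕ} {u : ℝ} {h : Fin m → ℝ} (hc : ∀ k, 0 < u^2 + h k^2) :
    0 < g m u h := Finset.prod_pos fun k _ => q_pos (hc k)

lemma g_nonneg (m : ℕ) (u : ℝ) (h : Fin m → ℝ) : 0 ≤ g m u h :=
  Finset.prod_nonneg fun k _ => q_nonneg _ _

lemma g_eq (m : ℕ) (u : ℝ) (h : Fin m → ℝ) :
    g m u h = (Real.sqrt (∏ k, (u^2 + h k ^2)))⁻¹ := by
  rw [g]
  have : ∀ (s : Finset (Fin m)), ∏ k ∈ s, q u (h k) = (Real.sqrt (∏ k ∈ s, (u^2 + h k ^2)))⁻¹ := by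
    intro s
    induction s using Finset.cons_induction_on with
    | empty => simp
    | cons _ _ ha ih =>
      rw [Finset.prod_cons, Finset.prod_cons, ih, Real.sqrt_mul (by positivity), mul_inv, q]
  exact this univ

/-- derivative of `q u ·` -/
lemma hasDerivAt_q {u x : ℝ} (hc : 0 < u^2 + x^2) :
    HasDerivAt (fun x => q u x) (-x * (q u x)^3) x := by
  have hs : Real.sqrt (u^2 + x^2) ≠ 0 := (Real.sqrt_pos.2 hc).ne'
  have h1 : HasDerivAt (fun x : ℝ => u^2 + x^2) (2*x) x := by
    simpa [mul_comm] using ((hasDerivAt_pow 2 x).const_add (u^2))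
  have h2 := (Real.hasDerivAt_sqrt hc.ne').comp x h1
  have h3 := h2.inv hs
  convert h3 using 1 <;> try rfl
  simp only [Function.comp_apply, q]
  have hsq' : Real.sqrt (x^2 + u^2) ^ 3 = (x^2 + u^2) * Real.sqrt (x^2 + u^2) := by
    rw [pow_succ, Real.sq_sqrt (by positivity)]
  have hs' : Real.sqrt (x^2 + u^2) ≠ 0 := by
    rw [show x^2 + u^2 = u^2 + x^2 by ring]; exact hs
  rw [show u^2 + x^2 = x^2 + u^2 by ring] at *
  field_simp

/-- derivative of `q · x` -/
lemma hasDerivAt_q' {u x : ℝ} (hc : 0 < u^2 + x^2) :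
    HasDerivAt (fun u => q u x) (-u * (q u x)^3) u := by
  have : (fun u => q u x) = fun u => q x u := by ext u; rw [q_symm]
  rw [this, q_symm]
  exact hasDerivAt_q (by linarith)

end S17
namespace S17

variable {m : ℕ}

noncomputable def pr (m : ℕ) (i : Fin m) : (Fin m → ℝ) →L[ℝ] ℝ :=
  ContinuousLinearMap.proj i

noncomputable def D1 (m : ℕ) (u : ℝ) (h : Fin m → ℝ) : (Fin m → ℝ) →L[ℝ] ℝ :=
  ∑ i, (-(h i) / (u^2 + h i^2) * g m u h) • pr m i

noncomputable def ds (m : ℕ) (u : ℝ) (h : Fin m → ℝ) (i : Fin m) : (Fin m → ℝ) →L[ℝ] ℝ :=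
  (-(h i) / (u^2 + h i^2)) • D1 m u h +
    (g m u h) • ((((h i)^2 - u^2) / (u^2 + (h i)^2)^2) • pr m i)

noncomputable def D2 (m : ℕ) (u : ℝ) (h : Fin m → ℝ) :
    (Fin m → ℝ) →L[ℝ] (Fin m → ℝ) →L[ℝ] ℝ :=
  ∑ i, (ds m u h i).smulRight (pr m i)

lemma hasFDerivAt_coord (m : ℕ) (u : ℝ) (h : Fin m → ℝ) (i : Fin m)
    (hc : 0 < u^2 + (h i)^2) :
    HasFDerivAt (fun h : Fin m → ℝ => q u (h i)) ((-(h i) * q u (h i)^3) • pr m i) h := by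
  have hp : HasFDerivAt (fun h : Fin m → ℝ => h i) (pr m i) h := (pr m i).hasFDerivAt
  have := (hasDerivAt_q hc).comp_hasFDerivAt h hp; exact this

lemma hasFDerivAt_g (m : ℕ) {u : ℝ} {h : Fin m → ℝ} (hc : ∀ k, 0 < u^2 + (h k)^2) :
    HasFDerivAt (g m u) (D1 m u h) h := by
  have H := HasFDerivAt.finsetProd (u := Finset.univ)
    (g := fun (i : Fin m) (h : Fin m → ℝ) => q u (h i))
    (g' := fun i => (-(h i) * q u (h i)^3) • pr m i)
    (fun i _ => hasFDerivAt_coord m u h i (hc i))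
  convert H using 1 <;> try rfl
  rw [D1]
  refine Finset.sum_congr rfl fun i _ => ?_
  rw [smul_smul]
  congr 1
  have hprod : q u (h i) * ∏ j ∈ Finset.univ.erase i, q u (h j) = g m u h := by
    rw [g]; exact Finset.mul_prod_erase Finset.univ (fun j => q u (h j)) (Finset.mem_univ i)
  rw [div_eq_mul_inv, ← q_sq, ← hprod]
  ring

lemma hasFDerivAt_coef (m : ℕ) {u : ℝ} {h : Fin m → ℝ} (i : Fin m)
    (hc : ∀ k, 0 < u^2 + (h k)^2) :
    HasFDerivAt (fun h : Fin m → ℝ => -(h i) / (u^2 + h i^2) * g m u h) (ds m u h i) h := by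
  have hφ : HasDerivAt (fun x : ℝ => -x / (u^2 + x^2)) (((h i)^2 - u^2) / (u^2 + (h i)^2)^2)
      (h i) := by
    have h1 : HasDerivAt (fun x : ℝ => -x) (-1) (h i) := (hasDerivAt_id _).neg
    have h2 : HasDerivAt (fun x : ℝ => u^2 + x^2) (2 * h i) (h i) := by
      simpa [mul_comm] using ((hasDerivAt_pow 2 (h i)).const_add (u^2))
    have := h1.div h2 (hc i).ne'
    convert this using 1 <;> try rfl
    field_simp
    ring
  have hcfd : HasFDerivAt (fun h : Fin m → ℝ => -(h i) / (u^2 + h i^2))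
      ((((h i)^2 - u^2) / (u^2 + (h i)^2)^2) • pr m i) h :=
    by have := hφ.comp_hasFDerivAt h (pr m i).hasFDerivAt; exact this
  exact hcfd.mul (hasFDerivAt_g m hc)

lemma hasFDerivAt_D1 (m : ℕ) {u : ℝ} {h : Fin m → ℝ} (hc : ∀ k, 0 < u^2 + (h k)^2) :
    HasFDerivAt (D1 m u) (D2 m u h) h := by
  have : HasFDerivAt (fun h : Fin m → ℝ => ∑ i, (-(h i) / (u^2 + h i^2) * g m u h) • pr m i)
      (∑ i, (ds m u h i).smulRight (pr m i)) h :=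
    HasFDerivAt.fun_sum fun i _ => (hasFDerivAt_coef m i hc).smul_const (pr m i)
  exact this

lemma D1_apply (m : ℕ) (u : ℝ) (h v : Fin m → ℝ) :
    D1 m u h v = (∑ i, -(h i) * v i / (u^2 + h i^2)) * g m u h := by
  rw [D1]
  simp only [ContinuousLinearMap.sum_apply, ContinuousLinearMap.smul_apply, pr,
    ContinuousLinearMap.proj_apply, smul_eq_mul, Finset.sum_mul]
  refine Finset.sum_congr rfl fun i _ => ?_
  ring

lemma D2_apply_self (m : ℕ) (u : ℝ) (h v : Fin m → ℝ) :
    D2 m u h v v = g m u h * ((∑ i, h i * v i / (u^2 + h i^2))^2 +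
      ∑ i, ((h i)^2 - u^2) / (u^2 + (h i)^2)^2 * (v i)^2) := by
  rw [D2]
  simp only [ContinuousLinearMap.sum_apply, ContinuousLinearMap.smulRight_apply, ds,
    ContinuousLinearMap.add_apply, ContinuousLinearMap.smul_apply, pr,
    ContinuousLinearMap.proj_apply, smul_eq_mul, D1_apply]
  have : ∀ i, (-(h i) / (u^2 + h i^2) * ((∑ j, -(h j) * v j / (u^2 + h j^2)) * g m u h) +
      g m u h * (((h i)^2 - u^2) / (u^2 + (h i)^2)^2 * v i)) * v i
      = (-(h i) * v i / (u^2 + h i^2)) * ((∑ j, -(h j) * v j / (u^2 + h j^2)) * g m u h) +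
        g m u h * (((h i)^2 - u^2) / (u^2 + (h i)^2)^2 * (v i)^2) := by
    intro i; ring
  rw [Finset.sum_congr rfl fun i _ => this i, Finset.sum_add_distrib, ← Finset.sum_mul,
    ← Finset.mul_sum]
  have hsq : (∑ i, -(h i) * v i / (u^2 + h i^2)) = -(∑ i, h i * v i / (u^2 + h i^2)) := by
    rw [← Finset.sum_neg_distrib]
    refine Finset.sum_congr rfl fun i _ => by ring
  rw [hsq]
  ring

end S17
set_option synthInstance.maxHeartbeats 400000
set_option maxHeartbeats 1000000
namespace S17

variable {m : ℕ}

instance instContAdd2 (m : ℕ) :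
    ContinuousAdd ((Fin m → ℝ) →L[ℝ] (Fin m → ℝ) →L[ℝ] ℝ) := by
  have h := (inferInstance : IsTopologicalAddGroup ((Fin m → ℝ) →L[ℝ] (Fin m → ℝ) →L[ℝ] ℝ))
  exact ⟨h.toContinuousAdd.continuous_add⟩

noncomputable instance instCENorm2 (m : ℕ) :
    ContinuousENorm ((Fin m → ℝ) →L[ℝ] (Fin m → ℝ) →L[ℝ] ℝ) :=
  @SeminormedAddGroup.toContinuousENorm _
    (@SeminormedAddCommGroup.toSeminormedAddGroup _ ContinuousLinearMap.toSeminormedAddCommGroup)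

lemma integrable_base {ε : ℝ} (hε : 0 < ε) :
    Integrable (fun u : ℝ => (u^2 + ε^2)⁻¹) (volume.restrict (Ioi 0)) := by
  have h0 : Integrable (fun x : ℝ => (1 + x^2)⁻¹) := integrable_inv_one_add_sq
  have h1 : Integrable (fun x : ℝ => (1 + (x * ε⁻¹)^2)⁻¹) :=
    h0.comp_mul_right' (inv_ne_zero hε.ne')
  have h2 : Integrable (fun x : ℝ => ε⁻¹^2 * (1 + (x * ε⁻¹)^2)⁻¹) := h1.const_mul _
  have h3 : (fun u : ℝ => (u^2 + ε^2)⁻¹) = fun x : ℝ => ε⁻¹^2 * (1 + (x * ε⁻¹)^2)⁻¹ := by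
    funext x
    have : (1 + (x * ε⁻¹)^2) = (x^2 + ε^2) / ε^2 := by field_simp; ring
    rw [this]
    field_simp
  rw [h3]
  exact h2.restrict

lemma g_le {ε u : ℝ} {h : Fin m → ℝ} (hε : 0 < ε) (hh : ∀ i, ε ≤ h i) :
    g m u h ≤ q u ε ^ m := by
  rw [g]
  calc ∏ k, q u (h k) ≤ ∏ _k : Fin m, q u ε :=
        Finset.prod_le_prod (fun k _ => q_nonneg _ _) (fun k _ => q_le_q hε (hh k))
    _ = q u ε ^ m := by rw [Finset.prod_const, Finset.card_univ, Fintype.card_fin]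

lemma q_le_inv {ε u : ℝ} (hε : 0 < ε) : q u ε ≤ ε⁻¹ := by
  rw [q]
  rw [show ε⁻¹ = (Real.sqrt (ε^2))⁻¹ by rw [Real.sqrt_sq hε.le]]
  exact inv_anti₀ (Real.sqrt_pos.2 (by positivity)) (Real.sqrt_le_sqrt (by nlinarith))

lemma qm_le {ε u : ℝ} (hm : 2 ≤ m) (hε : 0 < ε) :
    q u ε ^ m ≤ ε⁻¹ ^ (m - 2) * (u^2 + ε^2)⁻¹ := by
  have : q u ε ^ m = q u ε ^ (m - 2) * q u ε ^ 2 := by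
    rw [← pow_add, Nat.sub_add_cancel hm]
  rw [this, q_sq]
  exact mul_le_mul (pow_le_pow_left₀ (q_nonneg _ _) (q_le_inv hε) _) le_rfl
    (by positivity) (by positivity)

lemma norm_pr_le (i : Fin m) : ‖pr m i‖ ≤ 1 := by
  refine ContinuousLinearMap.opNorm_le_bound _ zero_le_one fun v => ?_
  rw [one_mul]
  exact norm_le_pi_norm v i

lemma norm_sum_smul_pr_le (c : Fin m → ℝ) : ‖∑ i, c i • pr m i‖ ≤ ∑ i, |c i| := by
  refine (norm_sum_le Finset.univ (fun i => c i • pr m i)).trans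
    (Finset.sum_le_sum fun i _ => ?_)
  refine (norm_smul_le (c i) (pr m i)).trans ?_
  rw [Real.norm_eq_abs]
  calc |c i| * ‖pr m i‖ ≤ |c i| * 1 :=
        mul_le_mul_of_nonneg_left (norm_pr_le i) (abs_nonneg _)
    _ = |c i| := mul_one _

lemma coef_abs_le {ε R u : ℝ} {h : Fin m → ℝ} (hε : 0 < ε) (hR : 0 ≤ R)
    (hh : ∀ i, ε ≤ h i) (hhR : ∀ i, |h i| ≤ R) (i : Fin m) :
    |(-(h i) / (u^2 + h i^2) * g m u h)| ≤ R / ε^2 * q u ε ^ m := by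
  rw [abs_mul, abs_div, abs_neg]
  have h1 : |h i| / |u^2 + h i^2| ≤ R / ε^2 := by
    rw [abs_of_pos (show (0:ℝ) < u^2 + h i^2 by nlinarith [hh i])]
    exact div_le_div₀ hR (hhR i) (by positivity) (by nlinarith [hh i])
  have h2 : |g m u h| ≤ q u ε ^ m := by
    rw [abs_of_nonneg (g_nonneg m u h)]; exact g_le hε hh
  exact mul_le_mul h1 h2 (abs_nonneg _) (by positivity)

lemma norm_D1_le {ε R u : ℝ} {h : Fin m → ℝ} (hε : 0 < ε) (hR : 0 ≤ R)
    (hh : ∀ i, ε ≤ h i) (hhR : ∀ i, |h i| ≤ R) :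
    ‖D1 m u h‖ ≤ m * (R / ε^2) * q u ε ^ m := by
  rw [D1]
  refine (norm_sum_smul_pr_le _).trans ?_
  calc (∑ i, |(-(h i) / (u^2 + h i^2) * g m u h)|)
      ≤ ∑ _i : Fin m, R / ε^2 * q u ε ^ m :=
        Finset.sum_le_sum fun i _ => coef_abs_le hε hR hh hhR i
    _ = m * (R / ε^2) * q u ε ^ m := by
        rw [Finset.sum_const, Finset.card_univ, Fintype.card_fin, nsmul_eq_mul]; ring

lemma norm_ds_le {ε R u : ℝ} {h : Fin m → ℝ} (hε : 0 < ε) (hR : 0 ≤ R)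
    (hh : ∀ i, ε ≤ h i) (hhR : ∀ i, |h i| ≤ R) (i : Fin m) :
    ‖ds m u h i‖ ≤ (R / ε^2 * (m * (R / ε^2)) + 1 / ε^2) * q u ε ^ m := by
  rw [ds]
  refine (norm_add_le _ _).trans ?_
  have hc : (0:ℝ) < u^2 + (h i)^2 := by nlinarith [hh i]
  have h1 : ‖(-(h i) / (u^2 + h i^2)) • D1 m u h‖ ≤
      R / ε^2 * (m * (R / ε^2) * q u ε ^ m) := by
    refine (norm_smul_le (-(h i) / (u^2 + h i^2)) (D1 m u h)).trans ?_
    rw [Real.norm_eq_abs, abs_div, abs_neg, abs_of_pos hc]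
    refine mul_le_mul ?_ (norm_D1_le hε hR hh hhR) (norm_nonneg _) (by positivity)
    exact div_le_div₀ hR (hhR i) (by positivity) (by nlinarith [hh i])
  have h2 : ‖g m u h • ((((h i)^2 - u^2) / (u^2 + (h i)^2)^2) • pr m i)‖ ≤
      1 / ε^2 * q u ε ^ m := by
    refine (norm_smul_le (g m u h) ((((h i)^2 - u^2) / (u^2 + (h i)^2)^2) • pr m i)).trans ?_
    have step2 : ‖(((h i)^2 - u^2) / (u^2 + (h i)^2)^2) • pr m i‖ ≤
        |((h i)^2 - u^2) / (u^2 + (h i)^2)^2| * ‖pr m i‖ := by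
      refine (norm_smul_le (((h i)^2 - u^2) / (u^2 + (h i)^2)^2) (pr m i)).trans ?_
      rw [Real.norm_eq_abs]
    rw [Real.norm_eq_abs, abs_of_nonneg (g_nonneg m u h)]
    have hb : |((h i)^2 - u^2) / (u^2 + (h i)^2)^2| ≤ 1 / ε^2 := by
      have hc2 : (0:ℝ) < u^2 + (h i)^2 := hc
      rw [abs_div, abs_of_pos (by positivity : (0:ℝ) < (u^2 + (h i)^2)^2)]
      have hnum : |(h i)^2 - u^2| ≤ u^2 + (h i)^2 := by
        rw [abs_le]; constructor <;> nlinarith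
      calc |(h i)^2 - u^2| / (u^2 + (h i)^2)^2
          ≤ (u^2 + (h i)^2) / (u^2 + (h i)^2)^2 :=
            div_le_div₀ hc2.le hnum (by positivity) le_rfl
        _ = 1 / (u^2 + (h i)^2) := by rw [div_eq_div_iff (by positivity) hc2.ne']; ring
        _ ≤ 1 / ε^2 := one_div_le_one_div_of_le (by positivity) (by nlinarith [hh i])
    calc g m u h * ‖(((h i)^2 - u^2) / (u^2 + (h i)^2)^2) • pr m i‖
        ≤ g m u h * (|((h i)^2 - u^2) / (u^2 + (h i)^2)^2| * ‖pr m i‖) :=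
          mul_le_mul_of_nonneg_left step2 (g_nonneg m u h)
      _ ≤ q u ε ^ m * (1 / ε^2 * 1) := by
          refine mul_le_mul (g_le hε hh) ?_ ?_ (pow_nonneg (q_nonneg _ _) _)
          · exact mul_le_mul hb (norm_pr_le i) (norm_nonneg _) (by positivity)
          · positivity
      _ = 1 / ε^2 * q u ε ^ m := by ring
  calc _ ≤ R / ε^2 * (m * (R / ε^2) * q u ε ^ m) + 1 / ε^2 * q u ε ^ m := add_le_add h1 h2
    _ = (R / ε^2 * (m * (R / ε^2)) + 1 / ε^2) * q u ε ^ m := by ring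

lemma norm_D2_le {ε R u : ℝ} {h : Fin m → ℝ} (hε : 0 < ε) (hR : 0 ≤ R)
    (hh : ∀ i, ε ≤ h i) (hhR : ∀ i, |h i| ≤ R) :
    ‖D2 m u h‖ ≤ m * ((R / ε^2 * (m * (R / ε^2)) + 1 / ε^2)) * q u ε ^ m := by
  rw [D2]
  refine (norm_sum_le Finset.univ (fun i => (ds m u h i).smulRight (pr m i))).trans ?_
  calc (∑ i, ‖(ds m u h i).smulRight (pr m i)‖)
      ≤ ∑ _i : Fin m, (R / ε^2 * (m * (R / ε^2)) + 1 / ε^2) * q u ε ^ m := by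
        refine Finset.sum_le_sum fun i _ => ?_
        rw [ContinuousLinearMap.norm_smulRight_apply]
        calc ‖ds m u h i‖ * ‖pr m i‖ ≤
            ((R / ε^2 * (m * (R / ε^2)) + 1 / ε^2) * q u ε ^ m) * 1 := by
              refine mul_le_mul (norm_ds_le hε hR hh hhR i) (norm_pr_le i) (norm_nonneg _) ?_
              exact mul_nonneg (by positivity) (pow_nonneg (q_nonneg _ _) _)
          _ = _ := mul_one _
    _ = _ := by rw [Finset.sum_const, Finset.card_univ, Fintype.card_fin, nsmul_eq_mul]; ring

lemma cont_q {x : ℝ} (hx : x ≠ 0) : Continuous (fun u => q u x) := by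
  refine Continuous.inv₀ (by fun_prop) fun u => ?_
  exact (Real.sqrt_pos.2 (by positivity)).ne'

lemma cont_g {h : Fin m → ℝ} (hc : ∀ k, h k ≠ 0) : Continuous (fun u => g m u h) := by
  unfold g
  exact continuous_finset_prod _ fun k _ => cont_q (hc k)

lemma cont_D1 {h : Fin m → ℝ} (hc : ∀ k, h k ≠ 0) : Continuous (fun u => D1 m u h) := by
  unfold D1
  refine continuous_finset_sum _ fun i _ => Continuous.fun_smul ?_ continuous_const
  have : Continuous (fun u : ℝ => -(h i) / (u^2 + h i^2)) := by
    refine Continuous.div (by fun_prop) (by fun_prop) fun u => ?_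
    have := hc i; positivity
  exact this.mul (cont_g hc)

lemma cont_D2 {h : Fin m → ℝ} (hc : ∀ k, h k ≠ 0) : Continuous (fun u => D2 m u h) := by
  unfold D2
  refine continuous_finset_sum _ fun i _ => ?_
  have hds : Continuous (fun u => ds m u h i) := by
    unfold ds
    refine Continuous.add (Continuous.fun_smul ?_ (cont_D1 hc)) (Continuous.fun_smul (cont_g hc)
      (Continuous.fun_smul ?_ continuous_const))
    · refine Continuous.div (by fun_prop) (by fun_prop) fun u => ?_
      have := hc i; positivity
    · refine Continuous.div (by fun_prop) (by fun_prop) fun u => ?_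
      have := hc i; positivity
  have : (fun u => (ds m u h i).smulRight (pr m i)) =
      fun u => ((ContinuousLinearMap.smulRightL ℝ (Fin m → ℝ) ((Fin m → ℝ) →L[ℝ] ℝ)).flip (pr m i)) (ds m u h i) :=
    rfl
  rw [this]
  exact (((ContinuousLinearMap.smulRightL ℝ (Fin m → ℝ) ((Fin m → ℝ) →L[ℝ] ℝ)).flip (pr m i)).continuous).comp hds

end S17
namespace S17

variable {m : ℕ}

lemma cone_ball {h₀ : Fin m → ℝ} (hm : 2 ≤ m) (hpos : ∀ i, 0 < h₀ i) :
    ∃ ε > 0, ∀ h ∈ Metric.ball h₀ ε, ∀ i, ε ≤ h i := by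
  haveI : Nonempty (Fin m) := ⟨⟨0, by omega⟩⟩
  set δ := Finset.univ.inf' Finset.univ_nonempty h₀ with hδ
  have hδpos : 0 < δ := by
    rw [hδ, Finset.lt_inf'_iff]
    exact fun i _ => hpos i
  refine ⟨δ/2, by linarith, fun h hh i => ?_⟩
  have h1 : |h i - h₀ i| ≤ dist h h₀ := by
    rw [← Real.dist_eq]
    exact dist_le_pi_dist h h₀ i
  have h2 : dist h h₀ < δ/2 := hh
  have h3 : δ ≤ h₀ i := Finset.inf'_le _ (Finset.mem_univ i)
  have := abs_le.1 h1
  linarith [this.1]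

lemma ball_normbound {h₀ : Fin m → ℝ} {ε : ℝ} {h : Fin m → ℝ} (hh : h ∈ Metric.ball h₀ ε) :
    ∀ i, |h i| ≤ ‖h₀‖ + ε := by
  intro i
  have h1 : |h i| ≤ ‖h‖ := by
    rw [← Real.norm_eq_abs]; exact norm_le_pi_norm h i
  have h2 : ‖h‖ ≤ ‖h₀‖ + ‖h - h₀‖ := by
    calc ‖h‖ = ‖h₀ + (h - h₀)‖ := by ring_nf
      _ ≤ ‖h₀‖ + ‖h - h₀‖ := norm_add_le _ _
  have h3 : ‖h - h₀‖ < ε := by rw [← dist_eq_norm]; exact hh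
  linarith

lemma integrable_g {ε : ℝ} {h : Fin m → ℝ} (hm : 2 ≤ m) (hε : 0 < ε) (hh : ∀ i, ε ≤ h i) :
    Integrable (fun u => g m u h) (volume.restrict (Set.Ioi (0:ℝ))) := by
  have hc : ∀ k, h k ≠ 0 := fun k => (lt_of_lt_of_le hε (hh k)).ne'
  refine Integrable.mono' ((integrable_base hε).const_mul (ε⁻¹ ^ (m-2)))
    (cont_g hc).aestronglyMeasurable ?_
  refine Filter.Eventually.of_forall fun u => ?_
  rw [Real.norm_eq_abs, abs_of_nonneg (g_nonneg m u h)]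
  exact (g_le hε hh).trans (qm_le hm hε)

lemma integrable_D1 {ε R : ℝ} {h : Fin m → ℝ} (hm : 2 ≤ m) (hε : 0 < ε) (hR : 0 ≤ R)
    (hh : ∀ i, ε ≤ h i) (hhR : ∀ i, |h i| ≤ R) :
    Integrable (fun u => D1 m u h) (volume.restrict (Set.Ioi (0:ℝ))) := by
  have hc : ∀ k, h k ≠ 0 := fun k => (lt_of_lt_of_le hε (hh k)).ne'
  refine Integrable.mono' ((integrable_base hε).const_mul (m * (R / ε^2) * ε⁻¹ ^ (m-2)))
    (cont_D1 hc).aestronglyMeasurable ?_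
  refine Filter.Eventually.of_forall fun u => ?_
  calc ‖D1 m u h‖ ≤ m * (R / ε^2) * q u ε ^ m := norm_D1_le hε hR hh hhR
    _ ≤ m * (R / ε^2) * (ε⁻¹ ^ (m-2) * (u^2 + ε^2)⁻¹) := by
        refine mul_le_mul_of_nonneg_left (qm_le hm hε) (by positivity)
    _ = m * (R / ε^2) * ε⁻¹ ^ (m-2) * (u^2 + ε^2)⁻¹ := by ring

lemma integrable_D2 {ε R : ℝ} {h : Fin m → ℝ} (hm : 2 ≤ m) (hε : 0 < ε) (hR : 0 ≤ R)
    (hh : ∀ i, ε ≤ h i) (hhR : ∀ i, |h i| ≤ R) :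
    Integrable (fun u => D2 m u h) (volume.restrict (Set.Ioi (0:ℝ))) := by
  have hc : ∀ k, h k ≠ 0 := fun k => (lt_of_lt_of_le hε (hh k)).ne'
  refine Integrable.mono' (β := ((Fin m → ℝ) →L[ℝ] (Fin m → ℝ) →L[ℝ] ℝ))
    ((integrable_base hε).const_mul (m * ((R / ε^2 * (m * (R / ε^2)) + 1 / ε^2)) * ε⁻¹ ^ (m-2)))
    (cont_D2 hc).aestronglyMeasurable ?_
  refine Filter.Eventually.of_forall fun u => ?_
  calc ‖D2 m u h‖ ≤ m * ((R / ε^2 * (m * (R / ε^2)) + 1 / ε^2)) * q u ε ^ m :=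
        norm_D2_le hε hR hh hhR
    _ ≤ m * ((R / ε^2 * (m * (R / ε^2)) + 1 / ε^2)) * (ε⁻¹ ^ (m-2) * (u^2 + ε^2)⁻¹) :=
        mul_le_mul_of_nonneg_left (qm_le hm hε) (by positivity)
    _ = m * ((R / ε^2 * (m * (R / ε^2)) + 1 / ε^2)) * ε⁻¹ ^ (m-2) * (u^2 + ε^2)⁻¹ := by ring

lemma hasFDerivAt_integral_g (hm : 2 ≤ m) {h₀ : Fin m → ℝ} (hpos : ∀ i, 0 < h₀ i) :
    HasFDerivAt (fun h : Fin m → ℝ => ∫ u in Set.Ioi (0:ℝ), g m u h)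
      (∫ u in Set.Ioi (0:ℝ), D1 m u h₀) h₀ := by
  obtain ⟨ε, hε, hball⟩ := cone_ball hm hpos
  set R : ℝ := ‖h₀‖ + ε with hRdef
  have hR : 0 ≤ R := by positivity
  have h₀ball : h₀ ∈ Metric.ball h₀ ε := Metric.mem_ball_self hε
  refine hasFDerivAt_integral_of_dominated_of_fderiv_le (𝕜 := ℝ) (s := Metric.ball h₀ ε) (hs := Metric.ball_mem_nhds h₀ hε)
    (F := fun (h : Fin m → ℝ) (u : ℝ) => g m u h) (F' := fun h u => D1 m u h) (x₀ := h₀)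
    (μ := volume.restrict (Set.Ioi (0:ℝ)))
    (bound := fun u => m * (R / ε^2) * ε⁻¹ ^ (m-2) * (u^2 + ε^2)⁻¹)
    ?_ ?_ ?_ ?_ ?_ ?_
  · filter_upwards [Metric.ball_mem_nhds h₀ hε] with x hx
    exact (cont_g fun k => (lt_of_lt_of_le hε (hball x hx k)).ne').aestronglyMeasurable
  · exact integrable_g hm hε (hball h₀ h₀ball)
  · exact (cont_D1 fun k => (hpos k).ne').aestronglyMeasurable
  · refine Filter.Eventually.of_forall fun u => fun x hx => ?_
    calc ‖D1 m u x‖ ≤ m * (R / ε^2) * q u ε ^ m :=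
          norm_D1_le hε hR (hball x hx) (ball_normbound hx)
      _ ≤ m * (R / ε^2) * (ε⁻¹ ^ (m-2) * (u^2 + ε^2)⁻¹) :=
          mul_le_mul_of_nonneg_left (qm_le hm hε) (by positivity)
      _ = m * (R / ε^2) * ε⁻¹ ^ (m-2) * (u^2 + ε^2)⁻¹ := by ring
  · exact ((integrable_base hε).const_mul _)
  · refine Filter.Eventually.of_forall fun u => fun x hx => ?_
    refine hasFDerivAt_g m fun k => ?_
    have := lt_of_lt_of_le hε (hball x hx k)
    positivity

lemma hasFDerivAt_integral_D1 (hm : 2 ≤ m) {h₀ : Fin m → ℝ} (hpos : ∀ i, 0 < h₀ i) :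
    HasFDerivAt (fun h : Fin m → ℝ => ∫ u in Set.Ioi (0:ℝ), D1 m u h)
      (∫ u in Set.Ioi (0:ℝ), D2 m u h₀) h₀ := by
  obtain ⟨ε, hε, hball⟩ := cone_ball hm hpos
  set R : ℝ := ‖h₀‖ + ε with hRdef
  have hR : 0 ≤ R := by positivity
  have h₀ball : h₀ ∈ Metric.ball h₀ ε := Metric.mem_ball_self hε
  refine hasFDerivAt_integral_of_dominated_of_fderiv_le (𝕜 := ℝ) (s := Metric.ball h₀ ε) (hs := Metric.ball_mem_nhds h₀ hε)
    (F := fun (h : Fin m → ℝ) (u : ℝ) => D1 m u h) (F' := fun h u => D2 m u h) (x₀ := h₀)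
    (μ := volume.restrict (Set.Ioi (0:ℝ)))
    (bound := fun u => m * ((R / ε^2 * (m * (R / ε^2)) + 1 / ε^2)) * ε⁻¹ ^ (m-2) * (u^2 + ε^2)⁻¹)
    ?_ ?_ ?_ ?_ ?_ ?_
  · filter_upwards [Metric.ball_mem_nhds h₀ hε] with x hx
    exact (cont_D1 fun k => (lt_of_lt_of_le hε (hball x hx k)).ne').aestronglyMeasurable
  · exact integrable_D1 hm hε hR (hball h₀ h₀ball) (ball_normbound h₀ball)
  · exact (cont_D2 fun k => (hpos k).ne').aestronglyMeasurable
  · refine Filter.Eventually.of_forall fun u => fun x hx => ?_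
    calc ‖D2 m u x‖ ≤ m * ((R / ε^2 * (m * (R / ε^2)) + 1 / ε^2)) * q u ε ^ m :=
          norm_D2_le hε hR (hball x hx) (ball_normbound hx)
      _ ≤ m * ((R / ε^2 * (m * (R / ε^2)) + 1 / ε^2)) * (ε⁻¹ ^ (m-2) * (u^2 + ε^2)⁻¹) :=
          mul_le_mul_of_nonneg_left (qm_le hm hε) (by positivity)
      _ = _ := by ring
  · exact ((integrable_base hε).const_mul _)
  · refine Filter.Eventually.of_forall fun u => fun x hx => ?_
    refine hasFDerivAt_D1 m fun k => ?_
    have := lt_of_lt_of_le hε (hball x hx k)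
    positivity

end S17
namespace S17

variable {m : ℕ}

noncomputable def Wfun (m : ℕ) (h v : Fin m → ℝ) (u : ℝ) : ℝ :=
  g m u h * (∑ i, (v i)^2 * (u / (u^2 + h i^2)))

noncomputable def Wdfun (m : ℕ) (h v : Fin m → ℝ) (u : ℝ) : ℝ :=
  (-(∑ k, u / (u^2 + h k^2)) * g m u h) * (∑ i, (v i)^2 * (u / (u^2 + h i^2)))
    + g m u h * (∑ i, (v i)^2 * (((h i)^2 - u^2) / (u^2 + (h i)^2)^2))

noncomputable def Qfun (m : ℕ) (h v : Fin m → ℝ) (u : ℝ) : ℝ :=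
  g m u h * ((∑ i, h i * v i / (u^2 + h i^2))^2
    + (∑ k, u / (u^2 + h k^2)) * (∑ i, (v i)^2 * (u / (u^2 + h i^2))))

lemma hasDerivAt_g_u {h : Fin m → ℝ} {u : ℝ} (hc : ∀ k, 0 < u^2 + (h k)^2) :
    HasDerivAt (fun u => g m u h) (-(∑ k, u / (u^2 + (h k)^2)) * g m u h) u := by
  have H := HasDerivAt.fun_finsetProd (u := Finset.univ) (f := fun (k : Fin m) (u : ℝ) => q u (h k))
    (f' := fun k => -u * q u (h k)^3) (x := u) (fun k _ => hasDerivAt_q' (hc k))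
  convert H using 1 <;> try rfl
  have hstep : -(∑ k, u / (u^2 + (h k)^2)) * g m u h
      = ∑ k, -(u / (u^2 + (h k)^2) * g m u h) := by
    rw [Finset.sum_neg_distrib, ← Finset.sum_mul, neg_mul]
  rw [hstep]
  refine Finset.sum_congr rfl fun k _ => ?_
  have hprod : q u (h k) * ∏ j ∈ Finset.univ.erase k, q u (h j) = g m u h := by
    rw [g]; exact Finset.mul_prod_erase Finset.univ (fun j => q u (h j)) (Finset.mem_univ k)
  rw [smul_eq_mul, div_eq_mul_inv, ← q_sq, ← hprod]
  ring

lemma hasDerivAt_W {h v : Fin m → ℝ} {u : ℝ} (hc : ∀ k, 0 < u^2 + (h k)^2) :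
    HasDerivAt (Wfun m h v) (Wdfun m h v u) u := by
  have hS : HasDerivAt (fun u : ℝ => ∑ i, (v i)^2 * (u / (u^2 + h i^2)))
      (∑ i, (v i)^2 * (((h i)^2 - u^2) / (u^2 + (h i)^2)^2)) u := by
    refine HasDerivAt.fun_sum fun i _ => ?_
    have h1 : HasDerivAt (fun u : ℝ => u / (u^2 + h i^2))
        (((h i)^2 - u^2) / (u^2 + (h i)^2)^2) u := by
      have hnum : HasDerivAt (fun u : ℝ => u) 1 u := hasDerivAt_id u
      have hden : HasDerivAt (fun u : ℝ => u^2 + h i^2) (2*u) u := by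
        simpa [mul_comm] using ((hasDerivAt_pow 2 u).add_const ((h i)^2))
      have := hnum.div hden (hc i).ne'
      convert this using 1 <;> try rfl
      field_simp
      ring
    exact h1.const_mul ((v i)^2)
  exact (hasDerivAt_g_u hc).mul hS

lemma D2_decomp {h v : Fin m → ℝ} {u : ℝ} :
    D2 m u h v v = Wdfun m h v u + Qfun m h v u := by
  rw [D2_apply_self, Wdfun, Qfun]
  have h1 : (∑ i, ((h i)^2 - u^2) / (u^2 + (h i)^2)^2 * (v i)^2)
      = ∑ i, (v i)^2 * (((h i)^2 - u^2) / (u^2 + (h i)^2)^2) :=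
    Finset.sum_congr rfl fun i _ => by ring
  rw [h1]
  ring

lemma sum_inv_repr (h : Fin m → ℝ) (c : Fin m → ℝ) (u : ℝ) :
    (∑ i, c i * (u / (u^2 + h i^2))) = u * ∑ i, c i * (u^2 + h i^2)⁻¹ := by
  rw [Finset.mul_sum]
  exact Finset.sum_congr rfl fun i _ => by rw [div_eq_mul_inv]; ring

lemma Q_nonneg (h v : Fin m → ℝ) (u : ℝ) : 0 ≤ Qfun m h v u := by
  unfold Qfun
  refine mul_nonneg (g_nonneg m u h) ?_
  have hC : (∑ k, u / (u^2 + h k^2)) = u * ∑ k, (u^2 + h k^2)⁻¹ := by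
    simpa using sum_inv_repr h (fun _ => (1:ℝ)) u
  have hD : (∑ i, (v i)^2 * (u / (u^2 + h i^2))) = u * ∑ i, (v i)^2 * (u^2 + h i^2)⁻¹ :=
    sum_inv_repr h _ u
  rw [hC, hD]
  have hS1 : 0 ≤ ∑ k, ((u:ℝ)^2 + h k^2)⁻¹ :=
    Finset.sum_nonneg fun k _ => by positivity
  have hS2 : 0 ≤ ∑ i, (v i)^2 * ((u:ℝ)^2 + h i^2)⁻¹ :=
    Finset.sum_nonneg fun i _ => by positivity
  nlinarith [sq_nonneg (∑ i, h i * v i / (u^2 + h i^2)), sq_nonneg u,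
    mul_nonneg hS1 hS2]

lemma Q_pos {h v : Fin m → ℝ} (hm : 2 ≤ m) (hpos : ∀ i, 0 < h i) (hv : v ≠ 0)
    {u : ℝ} (hu : 0 < u) : 0 < Qfun m h v u := by
  haveI : Nonempty (Fin m) := ⟨⟨0, by omega⟩⟩
  unfold Qfun
  have hg : 0 < g m u h := g_pos fun k => by have := hpos k; positivity
  refine mul_pos hg ?_
  have hC : 0 < ∑ k, u / (u^2 + h k^2) := by
    refine Finset.sum_pos (fun k _ => ?_) Finset.univ_nonempty
    have := hpos k; positivity
  obtain ⟨j, hj⟩ : ∃ j, v j ≠ 0 := by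
    by_contra hcon
    push_neg at hcon
    exact hv (funext fun i => hcon i)
  have hD : 0 < ∑ i, (v i)^2 * (u / (u^2 + h i^2)) := by
    refine Finset.sum_pos' (fun i _ => ?_) ⟨j, Finset.mem_univ j, ?_⟩
    · have := hpos i; positivity
    · have := hpos j
      have hvj : 0 < (v j)^2 := by positivity
      positivity
  nlinarith [sq_nonneg (∑ i, h i * v i / (u^2 + h i^2)), mul_pos hC hD]

lemma W_bound {ε : ℝ} {h v : Fin m → ℝ} (hm : 2 ≤ m) (hε : 0 < ε) (hh : ∀ i, ε ≤ h i)
    {u : ℝ} (hu : 0 ≤ u) :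
    Wfun m h v u ≤ ((∑ i, (v i)^2) / (2*ε)) * (ε⁻¹ ^ (m-2) * (u^2 + ε^2)⁻¹) := by
  unfold Wfun
  have hsum : (∑ i, (v i)^2 * (u / (u^2 + h i^2))) ≤ (∑ i, (v i)^2) / (2*ε) := by
    rw [Finset.sum_div]
    refine Finset.sum_le_sum fun i _ => ?_
    rw [div_eq_mul_inv ((v i)^2), mul_comm ((v i)^2) ((2*ε)⁻¹), mul_comm ((v i)^2)]
    refine mul_le_mul_of_nonneg_right ?_ (by positivity)
    -- u / (u^2 + h i ^2) ≤ (2 ε)⁻¹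
    have hi := hh i
    rw [div_le_iff₀ (by nlinarith)]
    rw [inv_mul_eq_div, le_div_iff₀ (by positivity)]
    nlinarith [sq_nonneg (u - h i), sq_nonneg (u - ε)]
  have hsnn : 0 ≤ (∑ i, (v i)^2 * (u / (u^2 + h i^2))) :=
    Finset.sum_nonneg fun i _ => by have := hh i; positivity
  calc g m u h * (∑ i, (v i)^2 * (u / (u^2 + h i^2)))
      ≤ (ε⁻¹ ^ (m-2) * (u^2 + ε^2)⁻¹) * ((∑ i, (v i)^2) / (2*ε)) := by
        refine mul_le_mul ((g_le hε hh).trans (qm_le hm hε)) hsum hsnn (by positivity)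
    _ = _ := by ring

lemma W_nonneg {h v : Fin m → ℝ} {u : ℝ} (hu : 0 ≤ u) (hh : ∀ i, 0 < h i) :
    0 ≤ Wfun m h v u := by
  unfold Wfun
  refine mul_nonneg (g_nonneg m u h) (Finset.sum_nonneg fun i _ => ?_)
  have := hh i; positivity

lemma tendsto_W {ε : ℝ} {h v : Fin m → ℝ} (hm : 2 ≤ m) (hε : 0 < ε) (hh : ∀ i, ε ≤ h i) :
    Filter.Tendsto (Wfun m h v) Filter.atTop (nhds 0) := by
  have hhp : ∀ i, 0 < h i := fun i => lt_of_lt_of_le hε (hh i)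
  have htend : Filter.Tendsto
      (fun u : ℝ => ((∑ i, (v i)^2) / (2*ε)) * (ε⁻¹ ^ (m-2) * (u^2 + ε^2)⁻¹))
      Filter.atTop (nhds 0) := by
    have h1 : Filter.Tendsto (fun u : ℝ => u^2 + ε^2) Filter.atTop Filter.atTop :=
      Filter.tendsto_atTop_add_const_right _ _ (Filter.tendsto_pow_atTop (two_ne_zero))
    have h2 : Filter.Tendsto (fun u : ℝ => (u^2 + ε^2)⁻¹) Filter.atTop (nhds 0) :=
      tendsto_inv_atTop_zero.comp h1
    have h3 := (h2.const_mul (ε⁻¹ ^ (m-2))).const_mul ((∑ i, (v i)^2) / (2*ε))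
    simpa using h3
  refine squeeze_zero' ?_ ?_ htend
  · filter_upwards [Filter.eventually_ge_atTop (0:ℝ)] with u hu
    exact W_nonneg hu hhp
  · filter_upwards [Filter.eventually_ge_atTop (0:ℝ)] with u hu
    exact W_bound hm hε hh hu

end S17
namespace S17

variable {m : ℕ}

lemma cont_sum_div {h : Fin m → ℝ} (c : Fin m → ℝ) (hc : ∀ k, h k ≠ 0) :
    Continuous (fun u : ℝ => ∑ i, c i * (u / (u^2 + h i^2))) := by
  refine continuous_finset_sum _ fun i _ => Continuous.mul continuous_const ?_
  refine Continuous.div continuous_id (by fun_prop) fun u => ?_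
  have := hc i; positivity

lemma cont_Q {h v : Fin m → ℝ} (hc : ∀ k, h k ≠ 0) : Continuous (Qfun m h v) := by
  unfold Qfun
  refine (cont_g hc).mul (Continuous.add (Continuous.pow ?_ 2) (Continuous.mul ?_ ?_))
  · refine continuous_finset_sum _ fun i _ => ?_
    refine Continuous.div continuous_const (by fun_prop) fun u => ?_
    have := hc i; positivity
  · simpa using cont_sum_div (m := m) (fun _ => (1:ℝ)) hc
  · exact cont_sum_div _ hc

lemma u_div_le {ε x u : ℝ} (hε : 0 < ε) (hx : ε ≤ x) (hu : 0 ≤ u) :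
    u / (u^2 + x^2) ≤ (2*ε)⁻¹ := by
  rw [div_le_iff₀ (by nlinarith), inv_mul_eq_div, le_div_iff₀ (by positivity)]
  nlinarith [sq_nonneg (u - x), sq_nonneg (u - ε)]

lemma abs_A_le {ε : ℝ} {h v : Fin m → ℝ} (hε : 0 < ε) (hh : ∀ i, ε ≤ h i) (u : ℝ) :
    |∑ i, h i * v i / (u^2 + h i^2)| ≤ ∑ i, |v i| / ε := by
  refine (Finset.abs_sum_le_sum_abs _ _).trans (Finset.sum_le_sum fun i _ => ?_)
  have hi : 0 < h i := lt_of_lt_of_le hε (hh i)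
  have hci : (0:ℝ) < u^2 + h i^2 := by positivity
  rw [abs_div, abs_mul, abs_of_pos hci, abs_of_pos hi, div_le_div_iff₀ hci hε]
  have h1 : ε * h i ≤ u^2 + h i^2 := by nlinarith [hh i]
  nlinarith [abs_nonneg (v i), mul_le_mul_of_nonneg_left h1 (abs_nonneg (v i))]

lemma Q_le {ε : ℝ} {h v : Fin m → ℝ} (hε : 0 < ε) (hh : ∀ i, ε ≤ h i)
    {u : ℝ} (hu : 0 ≤ u) :
    Qfun m h v u ≤ ((∑ i, |v i| / ε)^2 + (m * (2*ε)⁻¹) * (∑ i, (v i)^2 * (2*ε)⁻¹))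
      * g m u h := by
  unfold Qfun
  rw [mul_comm (g m u h)]
  refine mul_le_mul_of_nonneg_right ?_ (g_nonneg m u h)
  have hA : (∑ i, h i * v i / (u^2 + h i^2))^2 ≤ (∑ i, |v i| / ε)^2 := by
    have habs := abs_A_le (v := v) hε hh u
    have h2 := abs_le.1 habs
    exact sq_le_sq' (by linarith [h2.1]) h2.2
  have hC : (∑ k, u / (u^2 + h k^2)) ≤ m * (2*ε)⁻¹ := by
    calc (∑ k, u / (u^2 + h k^2)) ≤ ∑ _k : Fin m, (2*ε)⁻¹ :=
          Finset.sum_le_sum fun k _ => u_div_le hε (hh k) hu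
      _ = m * (2*ε)⁻¹ := by rw [Finset.sum_const, Finset.card_univ, Fintype.card_fin,
          nsmul_eq_mul]
  have hD : (∑ i, (v i)^2 * (u / (u^2 + h i^2))) ≤ ∑ i, (v i)^2 * (2*ε)⁻¹ :=
    Finset.sum_le_sum fun i _ => mul_le_mul_of_nonneg_left (u_div_le hε (hh i) hu)
      (by positivity)
  have hCnn : 0 ≤ (∑ k, u / (u^2 + h k^2)) :=
    Finset.sum_nonneg fun k _ => by
      have := lt_of_lt_of_le hε (hh k); positivity
  have hDnn : 0 ≤ (∑ i, (v i)^2 * (u / (u^2 + h i^2))) :=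
    Finset.sum_nonneg fun i _ => by
      have := lt_of_lt_of_le hε (hh i); positivity
  have hDub : 0 ≤ ∑ i, (v i)^2 * (2*ε)⁻¹ := Finset.sum_nonneg fun i _ => by positivity
  exact add_le_add hA (mul_le_mul hC hD hDnn (by positivity))

lemma integrable_Q {ε : ℝ} {h v : Fin m → ℝ} (hm : 2 ≤ m) (hε : 0 < ε)
    (hh : ∀ i, ε ≤ h i) :
    Integrable (Qfun m h v) (volume.restrict (Set.Ioi (0:ℝ))) := by
  have hc : ∀ k, h k ≠ 0 := fun k => (lt_of_lt_of_le hε (hh k)).ne'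
  refine Integrable.mono'
    ((integrable_g hm hε hh).const_mul
      ((∑ i, |v i| / ε)^2 + (m * (2*ε)⁻¹) * (∑ i, (v i)^2 * (2*ε)⁻¹)))
    (cont_Q hc).aestronglyMeasurable ?_
  filter_upwards [ae_restrict_mem measurableSet_Ioi] with u hu
  rw [Real.norm_eq_abs, abs_of_nonneg (Q_nonneg h v u)]
  have := Q_le hε hh (le_of_lt (Set.mem_Ioi.1 hu)) (v := v)
  linarith [this]

lemma cont_D2vv {h : Fin m → ℝ} (v : Fin m → ℝ) (hc : ∀ k, h k ≠ 0) :
    Continuous (fun u => D2 m u h v v) := by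
  have : (fun u => D2 m u h v v) = fun u => (ContinuousLinearMap.apply ℝ ℝ v)
      ((ContinuousLinearMap.apply ℝ ((Fin m → ℝ) →L[ℝ] ℝ) v) (D2 m u h)) := rfl
  rw [this]
  exact (ContinuousLinearMap.apply ℝ ℝ v).continuous.comp
    (((ContinuousLinearMap.apply ℝ ((Fin m → ℝ) →L[ℝ] ℝ) v).continuous).comp (cont_D2 hc))

lemma integrable_D2vv {ε R : ℝ} {h : Fin m → ℝ} (v : Fin m → ℝ) (hm : 2 ≤ m) (hε : 0 < ε)
    (hR : 0 ≤ R) (hh : ∀ i, ε ≤ h i) (hhR : ∀ i, |h i| ≤ R) :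
    Integrable (fun u => D2 m u h v v) (volume.restrict (Set.Ioi (0:ℝ))) := by
  have hc : ∀ k, h k ≠ 0 := fun k => (lt_of_lt_of_le hε (hh k)).ne'
  refine Integrable.mono' (((integrable_D2 hm hε hR hh hhR).norm (β := ((Fin m → ℝ) →L[ℝ] (Fin m → ℝ) →L[ℝ] ℝ))).mul_const (‖v‖ * ‖v‖))
    (cont_D2vv v hc).aestronglyMeasurable ?_
  refine Filter.Eventually.of_forall fun u => ?_
  calc ‖D2 m u h v v‖ ≤ ‖D2 m u h v‖ * ‖v‖ := ContinuousLinearMap.le_opNorm _ v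
    _ ≤ (‖D2 m u h‖ * ‖v‖) * ‖v‖ :=
        mul_le_mul_of_nonneg_right (ContinuousLinearMap.le_opNorm _ v) (norm_nonneg _)
    _ = ‖D2 m u h‖ * (‖v‖ * ‖v‖) := by ring

lemma integrable_Wd {ε R : ℝ} {h v : Fin m → ℝ} (hm : 2 ≤ m) (hε : 0 < ε)
    (hR : 0 ≤ R) (hh : ∀ i, ε ≤ h i) (hhR : ∀ i, |h i| ≤ R) :
    Integrable (Wdfun m h v) (volume.restrict (Set.Ioi (0:ℝ))) := by
  have heq : Wdfun m h v = fun u => D2 m u h v v - Qfun m h v u := by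
    funext u
    rw [D2_decomp]; ring
  rw [heq]
  exact (integrable_D2vv v hm hε hR hh hhR).sub (integrable_Q hm hε hh)

lemma integral_Wd_zero {ε R : ℝ} {h v : Fin m → ℝ} (hm : 2 ≤ m) (hε : 0 < ε)
    (hR : 0 ≤ R) (hh : ∀ i, ε ≤ h i) (hhR : ∀ i, |h i| ≤ R) :
    ∫ u in Set.Ioi (0:ℝ), Wdfun m h v u = 0 := by
  have hpos : ∀ i, 0 < h i := fun i => lt_of_lt_of_le hε (hh i)
  have hderiv : ∀ x ∈ Set.Ici (0:ℝ), HasDerivAt (Wfun m h v) (Wdfun m h v x) x :=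
    fun x _ => hasDerivAt_W (fun k => by have := hpos k; positivity)
  have := integral_Ioi_of_hasDerivAt_of_tendsto' hderiv
    (integrable_Wd hm hε hR hh hhR) (tendsto_W hm hε hh)
  rw [this]
  simp [Wfun]

lemma integral_D2vv_pos (hm : 2 ≤ m) {h v : Fin m → ℝ} (hpos : ∀ i, 0 < h i) (hv : v ≠ 0) :
    0 < ∫ u in Set.Ioi (0:ℝ), D2 m u h v v := by
  obtain ⟨ε, hε, hball⟩ := cone_ball hm hpos
  have hself : h ∈ Metric.ball h ε := Metric.mem_ball_self hε
  have hh := hball h hself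
  have hhR := ball_normbound hself
  have hR : (0:ℝ) ≤ ‖h‖ + ε := by positivity
  have heq : (fun u => D2 m u h v v) = fun u => Wdfun m h v u + Qfun m h v u :=
    funext fun u => D2_decomp
  rw [heq, integral_add (integrable_Wd hm hε hR hh hhR) (integrable_Q hm hε hh),
    integral_Wd_zero hm hε hR hh hhR, zero_add]
  refine (setIntegral_pos_iff_support_of_nonneg_ae ?_ ?_).2 ?_
  · exact Filter.Eventually.of_forall fun u => Q_nonneg h v u
  · exact integrable_Q hm hε hh
  · have hsub : Set.Ioi (0:ℝ) ⊆ Function.support (Qfun m h v) :=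
      fun u hu => (Q_pos hm hpos hv (Set.mem_Ioi.1 hu)).ne'
    rw [Set.inter_eq_self_of_subset_right hsub, Real.volume_Ioi]
    simp

lemma integral_D2_apply (hm : 2 ≤ m) {h : Fin m → ℝ} (hpos : ∀ i, 0 < h i) (v : Fin m → ℝ) :
    (∫ u in Set.Ioi (0:ℝ), D2 m u h) v v = ∫ u in Set.Ioi (0:ℝ), D2 m u h v v := by
  obtain ⟨ε, hε, hball⟩ := cone_ball hm hpos
  have hself : h ∈ Metric.ball h ε := Metric.mem_ball_self hε
  have hh := hball h hself
  have hhR := ball_normbound hself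
  have hR : (0:ℝ) ≤ ‖h‖ + ε := by positivity
  have hc : ∀ k, h k ≠ 0 := fun k => (hpos k).ne'
  have h1 : Integrable (fun u => D2 m u h) (volume.restrict (Set.Ioi (0:ℝ))) :=
    integrable_D2 hm hε hR hh hhR
  have h2 : Integrable (fun u => D2 m u h v) (volume.restrict (Set.Ioi (0:ℝ))) := by
    refine Integrable.mono' ((h1.norm (β := ((Fin m → ℝ) →L[ℝ] (Fin m → ℝ) →L[ℝ] ℝ))).mul_const ‖v‖) ?_ ?_
    · exact ((ContinuousLinearMap.apply ℝ ((Fin m → ℝ) →L[ℝ] ℝ) v).continuous.comp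
        (cont_D2 hc)).aestronglyMeasurable
    · exact Filter.Eventually.of_forall fun u => ContinuousLinearMap.le_opNorm _ v
  rw [ContinuousLinearMap.integral_apply h1 v, ContinuousLinearMap.integral_apply h2 v]

end S17
namespace S17

variable {m : ℕ}

lemma Phi_eq (m : ℕ) : Phi m = fun h => ∫ u in Set.Ioi (0:ℝ), g m u h := by
  funext h
  rw [Phi]
  simp only [g_eq]

lemma isOpen_cone : IsOpen {h : Fin m → ℝ | ∀ i, 0 < h i} := by
  have : {h : Fin m → ℝ | ∀ i, 0 < h i} = ⋂ i, {h : Fin m → ℝ | 0 < h i} := by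
    ext x; simp [Set.mem_iInter]
  rw [this]
  exact isOpen_iInter_of_finite fun i => isOpen_lt continuous_const (continuous_apply i)

lemma hasFDerivAt_Phi (hm : 2 ≤ m) {h : Fin m → ℝ} (hpos : ∀ i, 0 < h i) :
    HasFDerivAt (Phi m) (∫ u in Set.Ioi (0:ℝ), D1 m u h) h := by
  rw [Phi_eq m]
  exact hasFDerivAt_integral_g hm hpos

lemma fderiv_Phi (hm : 2 ≤ m) {h : Fin m → ℝ} (hpos : ∀ i, 0 < h i) :
    fderiv ℝ (Phi m) h = ∫ u in Set.Ioi (0:ℝ), D1 m u h :=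
  (hasFDerivAt_Phi hm hpos).fderiv

lemma fderiv_fderiv_Phi (hm : 2 ≤ m) {h : Fin m → ℝ} (hpos : ∀ i, 0 < h i) :
    fderiv ℝ (fderiv ℝ (Phi m)) h = ∫ u in Set.Ioi (0:ℝ), D2 m u h := by
  have hev : fderiv ℝ (Phi m) =ᶠ[nhds h] (fun x => ∫ u in Set.Ioi (0:ℝ), D1 m u x) := by
    filter_upwards [isOpen_cone.mem_nhds hpos] with x hx
    exact fderiv_Phi hm hx
  rw [hev.fderiv_eq]
  exact (hasFDerivAt_integral_D1 hm hpos).fderiv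

lemma hessian_pos (hm : 2 ≤ m) {h v : Fin m → ℝ} (hpos : ∀ i, 0 < h i) (hv : v ≠ 0) :
    0 < iteratedFDeriv ℝ 2 (Phi m) h ![v, v] := by
  rw [iteratedFDeriv_two_apply]
  simp only [Matrix.cons_val_zero, Matrix.cons_val_one, Matrix.head_cons]
  rw [fderiv_fderiv_Phi hm hpos, integral_D2_apply hm hpos]
  exact integral_D2vv_pos hm hpos hv

lemma inj (hm : 2 ≤ m) {h h' : Fin m → ℝ} (hpos : ∀ i, 0 < h i) (hpos' : ∀ i, 0 < h' i)
    (hgrad : ∀ i, fderiv ℝ (Phi m) h (Pi.single i 1) = fderiv ℝ (Phi m) h' (Pi.single i 1)) :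
    h = h' := by
  by_contra hne
  set v := h' - h with hv
  have hvne : v ≠ 0 := sub_ne_zero.2 (Ne.symm hne)
  have hGeq : fderiv ℝ (Phi m) h v = fderiv ℝ (Phi m) h' v := by
    have hrepr : v = ∑ i, v i • (Pi.single i 1 : Fin m → ℝ) := by
      funext j
      rw [Finset.sum_apply]
      simp [Pi.single_apply]
    rw [hrepr, map_sum, map_sum]
    refine Finset.sum_congr rfl fun i _ => ?_
    rw [ContinuousLinearMap.map_smul, ContinuousLinearMap.map_smul, hgrad i]
  set γ : ℝ → (Fin m → ℝ) := fun t => h + t • v with hγ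
  have hγcone : ∀ t ∈ Set.Icc (0:ℝ) 1, ∀ i, 0 < γ t i := by
    intro t ht i
    have h1 := hpos i; have h2 := hpos' i
    simp only [hγ, Pi.add_apply, Pi.smul_apply, smul_eq_mul, hv, Pi.sub_apply]
    rcases ht.1.lt_or_eq with htpos | hteq
    · nlinarith [mul_pos htpos h2, mul_nonneg (sub_nonneg.2 ht.2) h1.le]
    · rw [← hteq]; simpa using h1
  set φ : ℝ → ℝ := fun t => (∫ u in Set.Ioi (0:ℝ), D1 m u (γ t)) v with hφ
  have hd : ∀ t ∈ Set.Icc (0:ℝ) 1,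
      HasDerivAt φ ((∫ u in Set.Ioi (0:ℝ), D2 m u (γ t)) v v) t := by
    intro t ht
    have hγd : HasDerivAt γ v t := by
      have h1 : HasDerivAt (fun t : ℝ => t • v) ((1:ℝ) • v) t := (hasDerivAt_id t).smul_const v
      simpa [hγ] using h1.const_add h
    have hcomp := (hasFDerivAt_integral_D1 hm (hγcone t ht)).comp_hasDerivAt t hγd
    have := hcomp.clm_apply (hasDerivAt_const t v)
    simpa using this
  have hmono : StrictMonoOn φ (Set.Icc 0 1) := by
    refine strictMonoOn_of_deriv_pos (convex_Icc 0 1) ?_ ?_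
    · intro t ht
      exact ((hd t ht).continuousAt).continuousWithinAt
    · intro t ht
      rw [interior_Icc] at ht
      have hic : t ∈ Set.Icc (0:ℝ) 1 := ⟨le_of_lt ht.1, le_of_lt ht.2⟩
      rw [(hd t hic).deriv, integral_D2_apply hm (hγcone t hic)]
      exact integral_D2vv_pos hm (hγcone t hic) hvne
  have h01 : φ 0 < φ 1 :=
    hmono (Set.left_mem_Icc.2 zero_le_one) (Set.right_mem_Icc.2 zero_le_one) zero_lt_one
  have hφ0 : φ 0 = fderiv ℝ (Phi m) h v := by
    have hγ0 : γ 0 = h := by simp [hγ]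
    rw [hφ]
    simp only []
    rw [hγ0, ← fderiv_Phi hm hpos]
  have hφ1 : φ 1 = fderiv ℝ (Phi m) h' v := by
    have hγ1 : γ 1 = h' := by
      rw [hγ]; simp [hv]
    rw [hφ]
    simp only []
    rw [hγ1, ← fderiv_Phi hm hpos']
  rw [hφ0, hφ1, hGeq] at h01
  exact lt_irrefl _ h01

end S17



/-- The Hessian of `Φ` is positive definite on the positive cone; consequently the map
`h ↦ (a₁,…,a_{n-1})`, where `-2aᵢ = ∂Φ/∂hᵢ`, is injective on the positive cone. -/
theorem stmt_17 (n : ℕ) (hn : 3 ≤ n) :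
    (∀ h : Fin (n-1) → ℝ, (∀ i, 0 < h i) → ∀ v : Fin (n-1) → ℝ, v ≠ 0 →
      0 < iteratedFDeriv ℝ 2 (Phi (n-1)) h ![v, v]) ∧
    (∀ h h' : Fin (n-1) → ℝ, (∀ i, 0 < h i) → (∀ i, 0 < h' i) →
      (∀ i, fderiv ℝ (Phi (n-1)) h (Pi.single i 1) =
        fderiv ℝ (Phi (n-1)) h' (Pi.single i 1)) → h = h') := by
  have hm : 2 ≤ n - 1 := by omega
  constructor
  · intro h hpos v hv
    exact S17.hessian_pos hm hpos hv
  · intro h h' hpos hpos' hgrad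
    exact S17.inj hm hpos hpos' hgrad
end
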